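/- arXiv:2310.08776 — 6 statements merged into one kernel-verified Lean document; each statement's English description precedes it below -/
import Mathlib

section
/- Let f : [a,b] → ℝ be C¹ and for α ∈ ℝ define Φ_α : [α-b, α-a] × ℝ → ℝ by Φ_α(x₁,x₂) = x₂ + f(α - x₁). Then for any line segment L = {(1-t)p + tq : t ∈ [0,1]} contained in the domain of Φ_α, there is a constant C (depending only on f) such that the Lebesgue measure of Φ_α(L) is at most C · (sup over z ∈ L of |θ_α(z) − θ_L|) · |L|, where θ_L is the direction of L, θ_α(z) is the direction of the vector (1, f'(α − z₁)), |L| is the length of L, and |θ − θ'| denotes the distance in ℝ/πℤ. -/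
open Real MeasureTheory Set Filter
open scoped Pointwise ENNReal

noncomputable section

instance : Fact (0 < Real.pi) := ⟨Real.pi_pos⟩

/-- Unoriented direction of a plane vector, as an element of ℝ/πℤ. -/
def dir (v : ℝ × ℝ) : AddCircle Real.pi :=
  if v.1 = 0 then ((Real.pi / 2 : ℝ) : AddCircle Real.pi)
  else ((Real.arctan (v.2 / v.1) : ℝ) : AddCircle Real.pi)

/-- Euclidean length of a plane vector. -/
def elen (v : ℝ × ℝ) : ℝ := Real.sqrt (v.1 ^ 2 + v.2 ^ 2)

/-- Open Euclidean δ-neighborhood of a plane set. -/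
def enbhd (δ : ℝ) (S : Set (ℝ × ℝ)) : Set (ℝ × ℝ) := {x | ∃ y ∈ S, elen (x - y) < δ}

/-- Membership in the closed arc `[θ₁, θ₂]` of ℝ/πℤ (standard orientation). -/
def arcMemCC (θ₁ θ₂ θ : AddCircle Real.pi) : Prop :=
  ∃ t₁ t₂ t : ℝ, (t₁ : AddCircle Real.pi) = θ₁ ∧ (t₂ : AddCircle Real.pi) = θ₂ ∧
    (t : AddCircle Real.pi) = θ ∧ t₁ ≤ t ∧ t ≤ t₂ ∧ t₂ - t₁ < Real.pi

/-- Membership in the open arc `(θ₁, θ₂)` of ℝ/πℤ (standard orientation). -/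
def arcMemOO (θ₁ θ₂ θ : AddCircle Real.pi) : Prop :=
  ∃ t₁ t₂ t : ℝ, (t₁ : AddCircle Real.pi) = θ₁ ∧ (t₂ : AddCircle Real.pi) = θ₂ ∧
    (t : AddCircle Real.pi) = θ ∧ t₁ < t ∧ t < t₂ ∧ t₂ - t₁ < Real.pi

/- Along `L`, parametrized as `t ↦ p + t • (q - p)`, the map `Φ_α` is a C¹ function of `t` with
derivative `v₂ - f'(α - z₁) v₁`, `v = q - p`. This is the cross product of `(1, f'(α - z₁))` with
`v`, so its absolute value is `√(1 + f'²) |sin (θ_α(z) - θ_L)| |v| ≤ √(1 + M²) |θ_α(z) - θ_L| |L|`,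
where `M` bounds `|f'|` on `[a, b]`. By the mean value inequality this bounds the diameter, hence
the measure, of `Φ_α(L)`. -/

theorem AddCircle.dist_le_half_period {p : ℝ} (hp : p ≠ 0) (x y : AddCircle p) :
    dist x y ≤ |p| / 2 := by
  rw [dist_eq_norm]
  exact AddCircle.norm_le_half_period p hp

theorem abs_sin_sub_le_dist_coe_addCircle_pi (s t : ℝ) :
    |sin (s - t)| ≤ dist (s : AddCircle π) t := by
  rw [dist_eq_norm, ← AddCircle.coe_sub, AddCircle.norm_eq]
  calc |sin (s - t)| = |sin (s - t - round (π⁻¹ * (s - t)) * π)| := by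
        rw [sin_sub_int_mul_pi, abs_mul, abs_neg_one_zpow, one_mul]
    _ ≤ _ := abs_sin_le_abs

theorem exists_polar_dir (v : ℝ × ℝ) :
    ∃ r φ : ℝ, v = (r * cos φ, r * sin φ) ∧ |r| = elen v ∧ dir v = φ := by
  by_cases h : v.1 = 0
  · refine ⟨v.2, π / 2, ?_, by simp [elen, h, sqrt_sq_eq_abs], by simp [dir, h]⟩
    ext <;> simp [h]
  · set s := v.2 / v.1
    have hv : v.2 = v.1 * s := by simp only [s]; field_simp
    refine ⟨v.1 * √(1 + s ^ 2), arctan s, ?_, ?_, by simp [dir, h, s]⟩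
    · ext
      · simp [cos_arctan]
        field_simp
      · simp [sin_arctan, hv]
        field_simp
    · rw [abs_mul, abs_of_pos (sqrt_pos.2 (by positivity)), elen, ← sqrt_sq_eq_abs,
        ← sqrt_mul (sq_nonneg _), hv]
      ring_nf

theorem abs_snd_sub_mul_fst_le_dist_dir (m : ℝ) (v : ℝ × ℝ) :
    |v.2 - m * v.1| ≤ √(1 + m ^ 2) * dist (dir (1, m)) (dir v) * elen v := by
  obtain ⟨r, φ, rfl, hr, hφ⟩ := exists_polar_dir v
  have hψ : dir (1, m) = (arctan m : AddCircle π) := by simp [dir]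
  have hsin : r * sin φ - m * (r * cos φ) = √(1 + m ^ 2) * sin (φ - arctan m) * r := by
    rw [sin_sub, sin_arctan, cos_arctan]
    field_simp
  rw [hψ, hφ, dist_comm, ← hr, hsin, abs_mul, abs_mul, abs_of_pos (by positivity)]
  gcongr
  exact abs_sin_sub_le_dist_coe_addCircle_pi _ _

theorem volume_image_Icc_le_of_abs_deriv_le {g g' : ℝ → ℝ} {a b K : ℝ}
    (hg : ∀ t ∈ Icc a b, HasDerivAt g (g' t) t) (hK : ∀ t ∈ Icc a b, |g' t| ≤ K) :
    volume (g '' Icc a b) ≤ ENNReal.ofReal (K * (b - a)) := by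
  refine (Real.volume_le_diam _).trans (Metric.ediam_image_le_iff.2 fun s hs t ht => ?_)
  rw [edist_dist, Real.dist_eq]
  apply ENNReal.ofReal_le_ofReal
  calc |g s - g t| ≤ K * |s - t| :=
        (convex_Icc a b).norm_image_sub_le_of_norm_hasDerivWithin_le
          (fun x hx => (hg x hx).hasDerivWithinAt) hK ht hs
    _ ≤ K * (b - a) := by
        have : |s - t| ≤ b - a :=
          abs_sub_le_iff.2 ⟨by linarith [hs.2, ht.1], by linarith [hs.1, ht.2]⟩
        gcongr
        exact (abs_nonneg _).trans (hK s hs)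

theorem hasDerivAt_snd_add_comp_sub_fst_lineMap {f : ℝ → ℝ} {d α t : ℝ} (p v : ℝ × ℝ)
    (hf : HasDerivAt f d (α - (p + t • v).1)) :
    HasDerivAt (fun s : ℝ => (p + s • v).2 + f (α - (p + s • v).1)) (v.2 - d * v.1) t := by
  simp only [Prod.fst_add, Prod.snd_add, Prod.smul_fst, Prod.smul_snd, smul_eq_mul] at hf ⊢
  have hfst : HasDerivAt (fun s : ℝ => α - (p.1 + s * v.1)) (-v.1) t := by
    simpa using ((hasDerivAt_mul_const v.1).const_add p.1).const_sub α
  have hsnd : HasDerivAt (fun s : ℝ => p.2 + s * v.2) v.2 t := by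
    simpa using (hasDerivAt_mul_const v.2).const_add p.2
  rw [show v.2 - d * v.1 = v.2 + d * -v.1 by ring]
  exact hsnd.add (hf.comp t hfst)

theorem stmt0_general (a b : ℝ) (f f' : ℝ → ℝ)
    (hderiv : ∀ t ∈ Set.Icc a b, HasDerivAt f (f' t) t)
    (hcont : ContinuousOn f' (Set.Icc a b)) :
    ∃ C > 0, ∀ (α : ℝ) (p q : ℝ × ℝ), p ≠ q →
      segment ℝ p q ⊆ Set.Icc (α - b) (α - a) ×ˢ (Set.univ : Set ℝ) →
      volume ((fun x : ℝ × ℝ => x.2 + f (α - x.1)) '' segment ℝ p q) ≤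
        ENNReal.ofReal (C *
          sSup ((fun z : ℝ × ℝ => dist (dir (1, f' (α - z.1))) (dir (q - p))) '' segment ℝ p q) *
          elen (q - p)) := by
  obtain ⟨M, hM⟩ := isCompact_Icc.exists_bound_of_continuousOn hcont
  refine ⟨√(1 + M ^ 2), sqrt_pos.2 (by positivity), fun α p q _ hL => ?_⟩
  set θ : ℝ × ℝ → ℝ := fun z => dist (dir (1, f' (α - z.1))) (dir (q - p))
  have hθ : ∀ z ∈ segment ℝ p q, θ z ≤ sSup (θ '' segment ℝ p q) := fun z hz =>
    le_csSup ⟨|π| / 2, forall_mem_image.2 fun _ _ => AddCircle.dist_le_half_period pi_ne_zero _ _⟩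
      (mem_image_of_mem θ hz)
  have hstrip : ∀ z ∈ segment ℝ p q, α - z.1 ∈ Icc a b := fun z hz => by
    obtain ⟨h₁, h₂⟩ := (hL hz).1
    constructor <;> linarith
  have hline : ∀ t ∈ Icc (0 : ℝ) 1, p + t • (q - p) ∈ segment ℝ p q := fun t ht => by
    rw [segment_eq_image']
    exact mem_image_of_mem _ ht
  have himage : (fun x : ℝ × ℝ => x.2 + f (α - x.1)) '' segment ℝ p q =
      (fun s : ℝ => (p + s • (q - p)).2 + f (α - (p + s • (q - p)).1)) '' Icc 0 1 := by
    rw [segment_eq_image', ← image_comp]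
    rfl
  rw [himage]
  refine (volume_image_Icc_le_of_abs_deriv_le
    (fun t ht => hasDerivAt_snd_add_comp_sub_fst_lineMap p (q - p)
      (hderiv _ (hstrip _ (hline t ht)))) (fun t ht => ?_)).trans_eq (by rw [sub_zero, mul_one])
  have hf'M : f' (α - (p + t • (q - p)).1) ^ 2 ≤ M ^ 2 := by
    simpa using pow_le_pow_left₀ (abs_nonneg _) (hM _ (hstrip _ (hline t ht))) 2
  calc _ ≤ √(1 + f' (α - (p + t • (q - p)).1) ^ 2) * θ (p + t • (q - p)) * elen (q - p) :=
        abs_snd_sub_mul_fst_le_dist_dir _ _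
    _ ≤ √(1 + M ^ 2) * sSup (θ '' segment ℝ p q) * elen (q - p) := by
        gcongr
        · exact sqrt_nonneg _
        · exact hθ _ (hline t ht)

theorem stmt0 (a b : ℝ) (hab : a ≤ b) (f f' : ℝ → ℝ)
    (hderiv : ∀ t ∈ Set.Icc a b, HasDerivAt f (f' t) t)
    (hcont : ContinuousOn f' (Set.Icc a b)) :
    ∃ C > 0, ∀ (α : ℝ) (p q : ℝ × ℝ), p ≠ q →
      segment ℝ p q ⊆ Set.Icc (α - b) (α - a) ×ˢ (Set.univ : Set ℝ) →
      volume ((fun x : ℝ × ℝ => x.2 + f (α - x.1)) '' segment ℝ p q) ≤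
        ENNReal.ofReal (C *
          sSup ((fun z : ℝ × ℝ => dist (dir (1, f' (α - z.1))) (dir (q - p))) '' segment ℝ p q) *
          elen (q - p)) :=
  stmt0_general a b f f' hderiv hcont
end
end

section
/- Let a, b ∈ ℝ² be distinct, L the segment from a to b, and θ_small, θ_cover ∈ ℝ/πℤ pairwise distinct from θ_L. Let c be the unique point with segment(a,c) having direction θ_small and segment(b,c) having direction θ_cover. Then the segment from a to c is contained in the open δ-neighborhood of L, where δ = 2·(sin|θ_small − θ_L| / sin|θ_small − θ_cover|)·|b − a|. -/
open Real MeasureTheory Set Filter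
open scoped Pointwise ENNReal

noncomputable section

lemma sin_abs_of_abs_le_pi {y : ℝ} (h : |y| ≤ Real.pi) : Real.sin |y| = |Real.sin y| := by
  rcases abs_cases y with ⟨h1, h2⟩ | ⟨h1, h2⟩
  · rw [h1, abs_of_nonneg (Real.sin_nonneg_of_nonneg_of_le_pi h2 (h1 ▸ h))]
  · have hs : Real.sin y ≤ 0 := by
      have := Real.sin_nonneg_of_nonneg_of_le_pi (x := -y) (by linarith) (h1 ▸ h)
      rw [Real.sin_neg] at this; linarith
    rw [h1, Real.sin_neg, abs_of_nonpos hs]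

lemma sin_dist_coe (s t : ℝ) :
    Real.sin (dist ((s : AddCircle Real.pi)) ((t : AddCircle Real.pi))) = |Real.sin (s - t)| := by
  have hd : dist ((s : AddCircle Real.pi)) ((t : AddCircle Real.pi))
      = ‖((s - t : ℝ) : AddCircle Real.pi)‖ := by
    rw [dist_eq_norm]; norm_cast
  set y := s - t with hy
  have hle : ‖((y : ℝ) : AddCircle Real.pi)‖ ≤ Real.pi / 2 := by
    simpa [abs_of_pos Real.pi_pos] using
      AddCircle.norm_le_half_period Real.pi (x := (y : AddCircle Real.pi)) Real.pi_pos.ne'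
  rw [hd, AddCircle.norm_eq]
  set k : ℤ := round (Real.pi⁻¹ * y) with hk
  have habs : |y - (k : ℝ) * Real.pi| ≤ Real.pi := by
    rw [AddCircle.norm_eq] at hle; linarith [Real.pi_pos]
  rw [sin_abs_of_abs_le_pi habs]
  have : y - (k : ℝ) * Real.pi = -((k : ℝ) * Real.pi - y) := by ring
  rw [this, Real.sin_neg, Real.sin_int_mul_pi_sub]
  have h1 : |(-1 : ℝ) ^ k| = 1 := by
    rcases Int.even_or_odd k with he | ho
    · rw [he.neg_one_zpow]; simp
    · rw [ho.neg_one_zpow]; simp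
  simp [abs_mul, h1]

lemma dir_spec (v : ℝ × ℝ) (hv : v ≠ 0) :
    ∃ r θ : ℝ, r ≠ 0 ∧ dir v = (θ : AddCircle Real.pi) ∧
      v.1 = r * Real.cos θ ∧ v.2 = r * Real.sin θ := by
  by_cases h : v.1 = 0
  · have h2 : v.2 ≠ 0 := by
      intro h2; exact hv (Prod.ext h h2)
    exact ⟨v.2, Real.pi / 2, h2, by simp [dir, h], by simp [h], by simp⟩
  · refine ⟨v.1 / Real.cos (Real.arctan (v.2 / v.1)), Real.arctan (v.2 / v.1),
      div_ne_zero h (Real.cos_arctan_pos _).ne', by simp [dir, h], ?_, ?_⟩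
    · rw [div_mul_cancel₀ _ (Real.cos_arctan_pos _).ne']
    · rw [div_mul_comm, ← Real.tan_eq_sin_div_cos, Real.tan_arctan]
      field_simp

lemma elen_polar (r θ : ℝ) : elen (r * Real.cos θ, r * Real.sin θ) = |r| := by
  have : (r * Real.cos θ) ^ 2 + (r * Real.sin θ) ^ 2 = r ^ 2 := by
    have := Real.sin_sq_add_cos_sq θ; ring_nf; nlinarith
  rw [elen, this, Real.sqrt_sq_eq_abs]

lemma cross_abs (u v : ℝ × ℝ) (hu : u ≠ 0) (hv : v ≠ 0) :
    |u.1 * v.2 - u.2 * v.1| = elen u * elen v * Real.sin (dist (dir u) (dir v)) := by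
  obtain ⟨r, θ, hr, hdu, hu1, hu2⟩ := dir_spec u hu
  obtain ⟨s, φ, hs, hdv, hv1, hv2⟩ := dir_spec v hv
  have hu' : u = (r * Real.cos θ, r * Real.sin θ) := Prod.ext hu1 hu2
  have hv' : v = (s * Real.cos φ, s * Real.sin φ) := Prod.ext hv1 hv2
  rw [hdu, hdv, sin_dist_coe, hu', hv', elen_polar, elen_polar]
  have hcross : r * Real.cos θ * (s * Real.sin φ) - r * Real.sin θ * (s * Real.cos φ)
      = -(r * s * Real.sin (θ - φ)) := by
    rw [Real.sin_sub]; ring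
  simp only [hcross, abs_neg, abs_mul]

lemma elen_smul (t : ℝ) (v : ℝ × ℝ) : elen (t • v) = |t| * elen v := by
  simp only [elen, Prod.smul_fst, Prod.smul_snd, smul_eq_mul, mul_pow, ← mul_add,
    Real.sqrt_mul (sq_nonneg t), Real.sqrt_sq_eq_abs]

lemma elen_pos {v : ℝ × ℝ} (hv : v ≠ 0) : 0 < elen v := by
  rcases Prod.mk.injEq .. ▸ (by simpa [Prod.ext_iff] using hv : ¬(v.1 = 0 ∧ v.2 = 0)) with h
  have : 0 < v.1 ^ 2 + v.2 ^ 2 := by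
    rcases not_and_or.mp (by simpa [Prod.ext_iff] using hv) with h | h <;> positivity
  exact Real.sqrt_pos.mpr this

lemma sin_dist_pos {x y : AddCircle Real.pi} (hxy : x ≠ y) : 0 < Real.sin (dist x y) := by
  have h1 : 0 < dist x y := dist_pos.mpr hxy
  have h2 : dist x y ≤ Real.pi / 2 := by
    rw [dist_eq_norm]
    simpa [abs_of_pos Real.pi_pos] using
      AddCircle.norm_le_half_period Real.pi (x := x - y) Real.pi_pos.ne'
  exact Real.sin_pos_of_pos_of_lt_pi h1 (by linarith [Real.pi_pos])

theorem stmt2 (a b c : ℝ × ℝ) (hab : a ≠ b) (hca : c ≠ a) (hcb : c ≠ b)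
    (θsmall θcover : AddCircle Real.pi)
    (hd1 : dir (b - a) ≠ θsmall) (hd2 : dir (b - a) ≠ θcover) (hd3 : θsmall ≠ θcover)
    (hc1 : dir (c - a) = θsmall) (hc2 : dir (c - b) = θcover) :
    segment ℝ a c ⊆
      enbhd (2 * (Real.sin (dist θsmall (dir (b - a))) / Real.sin (dist θsmall θcover)) *
        elen (b - a)) (segment ℝ a b) := by
  have hu : c - a ≠ 0 := sub_ne_zero.mpr hca
  have hv : c - b ≠ 0 := sub_ne_zero.mpr hcb
  have hw : b - a ≠ 0 := sub_ne_zero.mpr (Ne.symm hab)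
  set u := c - a
  set v := c - b
  set w := b - a
  have hcross_eq : |u.1 * v.2 - u.2 * v.1| = |u.1 * w.2 - u.2 * w.1| := by
    have h1 : u.1 = w.1 + v.1 := by simp [u, v, w]
    have h2 : u.2 = w.2 + v.2 := by simp [u, v, w]
    have hneg : u.1 * v.2 - u.2 * v.1 = -(u.1 * w.2 - u.2 * w.1) := by rw [h1, h2]; ring
    rw [hneg, abs_neg]
  have key : elen u * elen v * Real.sin (dist θsmall θcover)
      = elen u * elen w * Real.sin (dist θsmall (dir w)) := by
    rw [← hc1, ← hc2, ← cross_abs u v hu hv, ← cross_abs u w hu hw]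
    exact hcross_eq
  have hS2 : 0 < Real.sin (dist θsmall θcover) := sin_dist_pos hd3
  have hS1 : 0 < Real.sin (dist θsmall (dir w)) := sin_dist_pos (Ne.symm hd1)
  have hEu : 0 < elen u := elen_pos hu
  have hEv : 0 < elen v := elen_pos hv
  have hEw : 0 < elen w := elen_pos hw
  have hlen : elen v = Real.sin (dist θsmall (dir w)) / Real.sin (dist θsmall θcover) * elen w := by
    field_simp
    nlinarith [key]
  intro x hx
  obtain ⟨p, q, hp, hq, hpq, hxeq⟩ := hx
  refine ⟨p • a + q • b, ⟨p, q, hp, hq, hpq, rfl⟩, ?_⟩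
  have hxy : x - (p • a + q • b) = q • v := by
    rw [← hxeq]
    simp only [v]
    ext <;> simp <;> ring
  rw [hxy, elen_smul, abs_of_nonneg hq]
  have hq1 : q ≤ 1 := by linarith
  have : q * elen v ≤ elen v := by nlinarith
  calc q * elen v ≤ elen v := this
    _ < 2 * (Real.sin (dist θsmall (dir w)) / Real.sin (dist θsmall θcover)) * elen w := by
        rw [hlen]
        have hpos : 0 < Real.sin (dist θsmall (dir w)) / Real.sin (dist θsmall θcover) * elen w := by
          positivity
        linarith
end
end

section
/- Let L be the segment from a to b with direction θ_L ∈ (θ_cover, θ_small) (as an arc in ℝ/πℤ), let c be such that segment(a,c) has direction θ_small and segment(b,c) has direction θ_cover, and let Δ be the convex hull of {a,b,c}. Let f : [a,b'] → ℝ be C¹ and α ∈ ℝ be such that Δ ⊂ dom Φ_α and θ_α(x) ∈ [θ_cover, θ_L] for all x ∈ Δ. Then Φ_α(L) ⊆ Φ_α(segment(a,c)). -/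
/-!
Write `Φ x = x.2 + f (α - x.1)`, so that `DΦ(x) u = cross (1, f'(α - x.1)) u`.  Since the direction
of `(1, f'(α - x.1))` lies between those of `c - q` and `q - p`, which in turn lies below that of
`c - p`, the line it spans separates `p - q` from `c - q` and misses `c - p`.  Hence
`DΦ(x)(c - p) ≠ 0` on the triangle, so by connectedness it has a constant sign, and so do
`DΦ(x)(q - p)` and `DΦ(x)(c - q)`.  By the mean value theorem `Φ` is then monotone along `p → q → c`,
so `Φ` maps `[p, q]` into the interval between `Φ p` and `Φ c`, which `Φ '' [p, c]` covers by the
intermediate value theorem.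
-/

open Real MeasureTheory Set Filter
open scoped Pointwise ENNReal

noncomputable section

section

variable {X E : Type*}

theorem IsPreconnected.forall_pos_or_forall_neg [TopologicalSpace X] {K : Set X}
    (hK : IsPreconnected K) {g : X → ℝ} (hg : ContinuousOn g K) (h0 : ∀ x ∈ K, g x ≠ 0) :
    (∀ x ∈ K, 0 < g x) ∨ (∀ x ∈ K, g x < 0) := by
  by_contra! ⟨⟨x, hx, hgx⟩, ⟨y, hy, hgy⟩⟩
  obtain ⟨z, hz, hgz⟩ := hK.intermediate_value hx hy hg ⟨hgx, hgy⟩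
  exact h0 z hz hgz

theorem IsPreconnected.forall_nonneg_or_forall_nonpos_of_mul_nonneg [TopologicalSpace X]
    {K : Set X} (hK : IsPreconnected K) {A B : X → ℝ} (hA : ContinuousOn A K)
    (hB : ContinuousOn B K) (hAB : ∀ x ∈ K, 0 ≤ A x * B x) (hsum : ∀ x ∈ K, A x + B x ≠ 0) :
    (∀ x ∈ K, 0 ≤ A x ∧ 0 ≤ B x) ∨ (∀ x ∈ K, A x ≤ 0 ∧ B x ≤ 0) := by
  rcases hK.forall_pos_or_forall_neg (g := fun x => A x + B x) (hA.add hB) hsum with hpos | hneg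
  · exact .inl fun x hx => by
      have := hAB x hx; have := hpos x hx; constructor <;> nlinarith
  · exact .inr fun x hx => by
      have := hAB x hx; have := hneg x hx; constructor <;> nlinarith

variable [NormedAddCommGroup E] [NormedSpace ℝ E] {K : Set E} {Φ : E → ℝ} {Φ' : E → StrongDual ℝ E}

theorem le_of_hasFDerivWithinAt_nonneg (hK : Convex ℝ K)
    (hΦ : ∀ x ∈ K, HasFDerivWithinAt Φ (Φ' x) K x) {a b : E} (ha : a ∈ K) (hb : b ∈ K)
    (hab : ∀ x ∈ K, 0 ≤ Φ' x (b - a)) : Φ a ≤ Φ b := by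
  obtain ⟨z, hz, hΦz⟩ := domain_mvt hΦ hK ha hb
  linarith [hab z (hK.segment_subset ha hb hz)]

theorem image_segment_subset_Icc_of_fderiv_nonneg (hK : Convex ℝ K)
    (hΦ : ∀ x ∈ K, HasFDerivWithinAt Φ (Φ' x) K x) {p q c : E} (hp : p ∈ K) (hq : q ∈ K)
    (hc : c ∈ K) (hpq : ∀ x ∈ K, 0 ≤ Φ' x (q - p)) (hqc : ∀ x ∈ K, 0 ≤ Φ' x (c - q)) :
    Φ '' segment ℝ p q ⊆ Icc (Φ p) (Φ c) := by
  rintro _ ⟨z, hz, rfl⟩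
  rw [segment_eq_image'] at hz
  obtain ⟨t, ⟨ht₀, ht₁⟩, rfl⟩ := hz
  have hzK : p + t • (q - p) ∈ K := hK.add_smul_sub_mem hp hq ⟨ht₀, ht₁⟩
  refine ⟨le_of_hasFDerivWithinAt_nonneg hK hΦ hp hzK fun x hx => ?_,
    (le_of_hasFDerivWithinAt_nonneg hK hΦ hzK hq fun x hx => ?_).trans
      (le_of_hasFDerivWithinAt_nonneg hK hΦ hq hc hqc)⟩
  · simpa using mul_nonneg ht₀ (hpq x hx)
  · have : q - (p + t • (q - p)) = (1 - t) • (q - p) := by module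
    simpa [this] using mul_nonneg (sub_nonneg.2 ht₁) (hpq x hx)

theorem image_segment_subset_image_segment_of_fderiv (hK : Convex ℝ K)
    (hΦ : ∀ x ∈ K, HasFDerivWithinAt Φ (Φ' x) K x) {p q c : E} (hp : p ∈ K) (hq : q ∈ K)
    (hc : c ∈ K)
    (hsign : (∀ x ∈ K, 0 ≤ Φ' x (q - p) ∧ 0 ≤ Φ' x (c - q)) ∨
      (∀ x ∈ K, Φ' x (q - p) ≤ 0 ∧ Φ' x (c - q) ≤ 0)) :
    Φ '' segment ℝ p q ⊆ Φ '' segment ℝ p c := by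
  have hpc : IsPreconnected (segment ℝ p c) := (convex_segment p c).isPreconnected
  have hcont : ContinuousOn Φ (segment ℝ p c) := fun x hx =>
    ((hΦ x (hK.segment_subset hp hc hx)).continuousWithinAt).mono (hK.segment_subset hp hc)
  rcases hsign with hnonneg | hnonpos
  · exact (image_segment_subset_Icc_of_fderiv_nonneg hK hΦ hp hq hc (fun x hx => (hnonneg x hx).1)
      fun x hx => (hnonneg x hx).2).trans
      (hpc.intermediate_value (left_mem_segment ℝ p c) (right_mem_segment ℝ p c) hcont)
  · have hneg := image_segment_subset_Icc_of_fderiv_nonneg (Φ := -Φ) (Φ' := -Φ') hK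
      (fun x hx => (hΦ x hx).neg) hp hq hc (fun x hx => by simpa using (hnonpos x hx).1)
      fun x hx => by simpa using (hnonpos x hx).2
    rintro _ ⟨z, hz, rfl⟩
    obtain ⟨h₁, h₂⟩ := hneg ⟨z, hz, rfl⟩
    exact hpc.intermediate_value (right_mem_segment ℝ p c) (left_mem_segment ℝ p c) hcont
      ⟨by simpa using h₂, by simpa using h₁⟩

end

def cross (u v : ℝ × ℝ) : ℝ := u.1 * v.2 - u.2 * v.1

theorem cross_add_right (w u v : ℝ × ℝ) : cross w (u + v) = cross w u + cross w v := by
  simp only [cross, Prod.fst_add, Prod.snd_add]; ring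

theorem cross_smul_left (k : ℝ) (w u : ℝ × ℝ) : cross (k • w) u = k * cross w u := by
  simp only [cross, Prod.smul_fst, Prod.smul_snd, smul_eq_mul]; ring

theorem cross_smul_right (l : ℝ) (w u : ℝ × ℝ) : cross w (l • u) = l * cross w u := by
  simp only [cross, Prod.smul_fst, Prod.smul_snd, smul_eq_mul]; ring

theorem cross_cos_sin (a b : ℝ) : cross (cos a, sin a) (cos b, sin b) = sin (b - a) := by
  rw [cross, sin_sub]; ring

theorem AddCircle.exists_int_of_coe_eq_coe {p x y : ℝ} (h : (x : AddCircle p) = y) :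
    ∃ k : ℤ, x = y + k * p := by
  rw [← sub_eq_zero, ← AddCircle.coe_sub, AddCircle.coe_eq_zero_iff] at h
  obtain ⟨k, hk⟩ := h
  exact ⟨k, by rw [zsmul_eq_mul] at hk; linarith⟩

theorem cos_mul_snd_eq_sin_mul_fst_of_coe_eq_dir {t : ℝ} {v : ℝ × ℝ}
    (h : (t : AddCircle π) = dir v) : cos t * v.2 = sin t * v.1 := by
  unfold dir at h
  split_ifs at h with hv
  · obtain ⟨k, rfl⟩ := AddCircle.exists_int_of_coe_eq_coe h
    simp [hv, cos_add_int_mul_pi]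
  · obtain ⟨k, rfl⟩ := AddCircle.exists_int_of_coe_eq_coe h
    have htan : sin (arctan (v.2 / v.1)) = v.2 / v.1 * cos (arctan (v.2 / v.1)) := by
      rw [sin_arctan, cos_arctan]; ring
    rw [cos_add_int_mul_pi, sin_add_int_mul_pi, htan]
    field_simp

theorem exists_eq_smul_of_coe_eq_dir {t : ℝ} {v : ℝ × ℝ} (h : (t : AddCircle π) = dir v) :
    ∃ l : ℝ, v = l • (cos t, sin t) := by
  have h' := cos_mul_snd_eq_sin_mul_fst_of_coe_eq_dir h
  refine ⟨v.1 * cos t + v.2 * sin t, Prod.ext ?_ ?_⟩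
  · simp only [Prod.smul_fst, smul_eq_mul]
    linear_combination (-v.1) * sin_sq_add_cos_sq t - sin t * h'
  · simp only [Prod.smul_snd, smul_eq_mul]
    linear_combination (-v.2) * sin_sq_add_cos_sq t + cos t * h'

theorem exists_mem_Icc_of_arcMemCC {tc tL : ℝ} (hle : tc ≤ tL) (hlt : tL - tc < π)
    {θ : AddCircle π} (h : arcMemCC tc tL θ) : ∃ r ∈ Icc tc tL, (r : AddCircle π) = θ := by
  obtain ⟨t₁, t₂, t, h₁, h₂, rfl, ht₁, ht₂, hπ⟩ := h
  have hwidth : t₂ - t₁ = tL - tc := by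
    rw [← AddCircle.coe_eq_coe_iff_of_mem_Ico (p := π) (a := 0) ⟨by linarith, by linarith⟩
      ⟨by linarith, by linarith⟩, AddCircle.coe_sub, AddCircle.coe_sub, h₁, h₂]
  refine ⟨t - t₁ + tc, ⟨by linarith, by linarith⟩, ?_⟩
  rw [AddCircle.coe_add, AddCircle.coe_sub, h₁, sub_add_cancel]

theorem mul_nonpos_of_smul_add_smul_eq_smul {tc tL ts l m n : ℝ} (hc : 0 < ts - tc)
    (hc' : ts - tc < π) (hL : 0 < ts - tL) (hL' : ts - tL < π)
    (h : l • (cos tL, sin tL) + m • (cos tc, sin tc) = n • (cos ts, sin ts)) : l * m ≤ 0 := by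
  have hcross := congrArg (cross (cos ts, sin ts)) h
  simp only [cross_add_right, cross_smul_right, cross_cos_sin, sub_self, sin_zero,
    mul_zero] at hcross
  have hsL : 0 < sin (ts - tL) := sin_pos_of_pos_of_lt_pi hL hL'
  have hsc : 0 < sin (ts - tc) := sin_pos_of_pos_of_lt_pi hc hc'
  rw [← neg_sub ts tL, ← neg_sub ts tc, sin_neg, sin_neg] at hcross
  have hlmL : l * m * sin (ts - tL) = -(m ^ 2 * sin (ts - tc)) := by
    linear_combination (-m) * hcross
  nlinarith [mul_nonneg (sq_nonneg m) hsc.le]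

/-- The line spanned by `w` separates `-u` from `v` and does not contain `u + v`. -/
theorem cross_mul_cross_nonneg_and_cross_add_ne_zero {tc tL ts : ℝ} (hcL : tc ≤ tL)
    (hLs : tL < ts) (hcs : ts - tc < π) {u v w : ℝ × ℝ} (hu : (tL : AddCircle π) = dir u)
    (hv : (tc : AddCircle π) = dir v) (huv : (ts : AddCircle π) = dir (u + v)) (huv0 : u + v ≠ 0)
    (hw0 : w ≠ 0) (hw : arcMemCC tc tL (dir w)) :
    0 ≤ cross w u * cross w v ∧ cross w (u + v) ≠ 0 := by
  obtain ⟨r, ⟨hcr, hrL⟩, hr⟩ := exists_mem_Icc_of_arcMemCC hcL (by linarith) hw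
  obtain ⟨k, rfl⟩ := exists_eq_smul_of_coe_eq_dir hr
  obtain ⟨l, rfl⟩ := exists_eq_smul_of_coe_eq_dir hu
  obtain ⟨m, rfl⟩ := exists_eq_smul_of_coe_eq_dir hv
  obtain ⟨n, hn⟩ := exists_eq_smul_of_coe_eq_dir huv
  have hlm := mul_nonpos_of_smul_add_smul_eq_smul (by linarith) hcs (by linarith) (by linarith) hn
  have hk : k ≠ 0 := by rintro rfl; simp at hw0
  have hn0 : n ≠ 0 := by rintro rfl; rw [zero_smul] at hn; exact huv0 hn
  rw [hn]
  simp only [cross_smul_left, cross_smul_right, cross_cos_sin]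
  have hsL : 0 ≤ sin (tL - r) := sin_nonneg_of_nonneg_of_le_pi (by linarith) (by linarith)
  have hsc : 0 ≤ sin (r - tc) := sin_nonneg_of_nonneg_of_le_pi (by linarith) (by linarith)
  have hss : 0 < sin (ts - r) := sin_pos_of_pos_of_lt_pi (by linarith) (by linarith)
  rw [← neg_sub r tc, sin_neg]
  refine ⟨?_, by positivity⟩
  have := mul_nonneg (mul_nonneg (sq_nonneg k) hsL) hsc
  nlinarith

theorem hasFDerivAt_snd_add_comp_const_sub_fst {f : ℝ → ℝ} {d α : ℝ} {x : ℝ × ℝ}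
    (hf : HasDerivAt f d (α - x.1)) :
    HasFDerivAt (fun x : ℝ × ℝ => x.2 + f (α - x.1))
      (ContinuousLinearMap.snd ℝ ℝ ℝ - d • ContinuousLinearMap.fst ℝ ℝ ℝ) x := by
  have hinner : HasFDerivAt (fun x : ℝ × ℝ => α - x.1) (-ContinuousLinearMap.fst ℝ ℝ ℝ) x :=
    hasFDerivAt_fst.const_sub α
  refine (hasFDerivAt_snd.add (hf.hasFDerivAt.comp x hinner)).congr_fderiv ?_
  ext <;> simp [sub_eq_add_neg]

theorem stmt4_general (a' b' : ℝ) (f f' : ℝ → ℝ)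
    (hderiv : ∀ t ∈ Set.Icc a' b', HasDerivAt f (f' t) t)
    (hcont : ContinuousOn f' (Set.Icc a' b'))
    (p q c : ℝ × ℝ) (hcp : c ≠ p)
    (θsmall θcover : AddCircle Real.pi)
    (hθL : arcMemOO θcover θsmall (dir (q - p)))
    (hc1 : dir (c - p) = θsmall) (hc2 : dir (c - q) = θcover)
    (α : ℝ)
    (hdom : convexHull ℝ ({p, q, c} : Set (ℝ × ℝ)) ⊆
      Set.Icc (α - b') (α - a') ×ˢ (Set.univ : Set ℝ))
    (hang : ∀ x ∈ convexHull ℝ ({p, q, c} : Set (ℝ × ℝ)),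
      arcMemCC θcover (dir (q - p)) (dir (1, f' (α - x.1)))) :
    (fun x : ℝ × ℝ => x.2 + f (α - x.1)) '' segment ℝ p q ⊆
      (fun x : ℝ × ℝ => x.2 + f (α - x.1)) '' segment ℝ p c := by
  obtain ⟨tc, ts, tL, rfl, rfl, heL, hcL, hLs, hcs⟩ := hθL
  set K := convexHull ℝ ({p, q, c} : Set (ℝ × ℝ))
  have hK : Convex ℝ K := convex_convexHull ℝ _
  have hslope : ∀ x ∈ K, α - x.1 ∈ Icc a' b' := fun x hx => by
    obtain ⟨⟨h₁, h₂⟩, -⟩ := hdom hx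
    constructor <;> linarith
  have hcont_cross : ∀ u, ContinuousOn (fun x : ℝ × ℝ => cross (1, f' (α - x.1)) u) K := fun u => by
    have hs : ContinuousOn (fun x : ℝ × ℝ => f' (α - x.1)) K := hcont.comp (by fun_prop) hslope
    simp only [cross, one_mul]
    exact continuousOn_const.sub (hs.mul continuousOn_const)
  have hkey : ∀ x ∈ K, 0 ≤ cross (1, f' (α - x.1)) (q - p) * cross (1, f' (α - x.1)) (c - q) ∧
      cross (1, f' (α - x.1)) (q - p + (c - q)) ≠ 0 := fun x hx =>
    cross_mul_cross_nonneg_and_cross_add_ne_zero hcL.le hLs hcs heL hc2.symm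
      (by rw [sub_add_sub_cancel']; exact hc1.symm) (by rwa [sub_add_sub_cancel', sub_ne_zero])
      (by simp) (heL ▸ hang x hx)
  refine image_segment_subset_image_segment_of_fderiv hK
    (fun x hx => (hasFDerivAt_snd_add_comp_const_sub_fst (hderiv _ (hslope x hx))).hasFDerivWithinAt)
    (subset_convexHull ℝ _ (by simp)) (subset_convexHull ℝ _ (by simp))
    (subset_convexHull ℝ _ (by simp)) ?_
  simpa [cross] using hK.isPreconnected.forall_nonneg_or_forall_nonpos_of_mul_nonneg
    (hcont_cross (q - p)) (hcont_cross (c - q)) (fun x hx => (hkey x hx).1)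
    fun x hx => cross_add_right .. ▸ (hkey x hx).2

theorem stmt4 (a' b' : ℝ) (ha'b' : a' ≤ b') (f f' : ℝ → ℝ)
    (hderiv : ∀ t ∈ Set.Icc a' b', HasDerivAt f (f' t) t)
    (hcont : ContinuousOn f' (Set.Icc a' b'))
    (p q c : ℝ × ℝ) (hpq : p ≠ q) (hcp : c ≠ p) (hcq : c ≠ q)
    (θsmall θcover : AddCircle Real.pi)
    (hθL : arcMemOO θcover θsmall (dir (q - p)))
    (hc1 : dir (c - p) = θsmall) (hc2 : dir (c - q) = θcover)
    (α : ℝ)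
    (hdom : convexHull ℝ ({p, q, c} : Set (ℝ × ℝ)) ⊆
      Set.Icc (α - b') (α - a') ×ˢ (Set.univ : Set ℝ))
    (hang : ∀ x ∈ convexHull ℝ ({p, q, c} : Set (ℝ × ℝ)),
      arcMemCC θcover (dir (q - p)) (dir (1, f' (α - x.1)))) :
    (fun x : ℝ × ℝ => x.2 + f (α - x.1)) '' segment ℝ p q ⊆
      (fun x : ℝ × ℝ => x.2 + f (α - x.1)) '' segment ℝ p c :=
  stmt4_general a' b' f f' hderiv hcont p q c hcp θsmall θcover hθL hc1 hc2 α hdom hang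
end
end

section
/- Let f : [a,b] → ℝ be C¹ with f' strictly monotone and let Γ = {(t, f(t)) : t ∈ [a,b]}, and for [a',b'] ⊆ [a,b] let Γ̃ = {(t, f(t)) : t ∈ [a',b']} with a' < b'. Then the interior of the difference set Γ − Γ̃ equals (Γ° − Γ̃°) \ {0}, where Γ° and Γ̃° denote the relative interiors (graphs over the open intervals). In particular, Γ − Γ̃ has nonempty interior. -/
/-!
The map `(t, u) ↦ (t - u, f t - f u)` has Jacobian determinant `f' t - f' u`, which vanishes
nowhere off the diagonal because `f'` is injective; by the inverse function theorem every
difference of two points over the open intervals, other than `0`, is an interior point.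
Conversely, the vertical slice of the difference set over `s` is the image of an interval under
`u ↦ f (u + s) - f u`. For `s ≠ 0` this map is injective by Rolle's theorem, hence strictly
monotone, so interior points of the slice only come from interior parameters; the slice over
`0` is `{0}`, which has empty interior.
-/

open Real MeasureTheory Set Filter
open scoped Pointwise ENNReal

noncomputable section

open Topology

def graphSub (f : ℝ → ℝ) (q : ℝ × ℝ) : ℝ × ℝ := (q.1 - q.2, f q.1 - f q.2)

theorem image_graph_sub_image_graph (f : ℝ → ℝ) (A B : Set ℝ) :
    (fun t => (t, f t)) '' A - (fun t => (t, f t)) '' B = graphSub f '' A ×ˢ B := by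
  rw [← image2_sub, image2_image_left, image2_image_right, ← image_prod]
  rfl

theorem preimage_mk_graphSub_image (f : ℝ → ℝ) (A B : Set ℝ) (s : ℝ) :
    Prod.mk s ⁻¹' (graphSub f '' A ×ˢ B) =
      (fun u => f (u + s) - f u) '' ((· + s) ⁻¹' A ∩ B) := by
  ext w
  constructor
  · rintro ⟨⟨t, u⟩, ⟨ht, hu⟩, h⟩
    simp only [graphSub, Prod.mk.injEq] at h
    obtain ⟨rfl, rfl⟩ := h
    exact ⟨u, ⟨by simpa using ht, hu⟩, by simp⟩
  · rintro ⟨u, ⟨hu, hu'⟩, rfl⟩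
    exact ⟨(u + s, u), ⟨hu, hu'⟩, by simp [graphSub]⟩

theorem hasStrictFDerivAt_graphSub {f : ℝ → ℝ} {c d t u : ℝ} (ht : HasStrictDerivAt f c t)
    (hu : HasStrictDerivAt f d u) :
    HasStrictFDerivAt (graphSub f)
      ((ContinuousLinearMap.fst ℝ ℝ ℝ - ContinuousLinearMap.snd ℝ ℝ ℝ).prod
        (c • ContinuousLinearMap.fst ℝ ℝ ℝ - d • ContinuousLinearMap.snd ℝ ℝ ℝ)) (t, u) :=
  (hasStrictFDerivAt_fst.sub hasStrictFDerivAt_snd).prodMk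
    ((ht.comp_hasStrictFDerivAt (t, u) hasStrictFDerivAt_fst).sub
      (hu.comp_hasStrictFDerivAt (t, u) hasStrictFDerivAt_snd))

theorem graphSub_image_mem_nhds {f : ℝ → ℝ} {c d t u : ℝ} {U V : Set ℝ} (hU : U ∈ 𝓝 t)
    (hV : V ∈ 𝓝 u) (ht : HasStrictDerivAt f c t) (hu : HasStrictDerivAt f d u) (hcd : c ≠ d) :
    graphSub f '' U ×ˢ V ∈ 𝓝 (graphSub f (t, u)) := by
  rw [← (hasStrictFDerivAt_graphSub ht hu).map_nhds_eq_of_surj]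
  · exact image_mem_map (prod_mem_nhds hU hV)
  · have hcd' : c - d ≠ 0 := sub_ne_zero.mpr hcd
    refine LinearMap.range_eq_top.mpr fun p =>
      ⟨((p.2 - d * p.1) / (c - d), (p.2 - c * p.1) / (c - d)), ?_⟩
    ext <;>
      simp only [ContinuousLinearMap.coe_prod, ContinuousLinearMap.toLinearMap_sub,
        ContinuousLinearMap.coe_fst, ContinuousLinearMap.coe_snd,
        ContinuousLinearMap.toLinearMap_smul, LinearMap.prod_apply, Function.prod_apply,
        LinearMap.sub_apply, LinearMap.fst_apply, LinearMap.snd_apply, LinearMap.smul_apply,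
        smul_eq_mul] <;>
      field_simp <;> ring

theorem interior_image_Icc_subset_image_Ioo {g : ℝ → ℝ} {α β : ℝ}
    (hc : ContinuousOn g (Icc α β)) (hi : InjOn g (Icc α β)) :
    interior (g '' Icc α β) ⊆ g '' Ioo α β := by
  rcases lt_or_ge β α with h | h
  · simp [Icc_eq_empty_of_lt h]
  rcases hc.strictMonoOn_of_injOn_Icc' h hi with hm | hm
  · rw [hc.image_Icc_of_monotoneOn h hm.monotoneOn, interior_Icc,
      hc.image_Ioo_of_strictMonoOn h hm]
  · rw [hc.image_Icc_of_antitoneOn h hm.antitoneOn, interior_Icc,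
      hc.image_Ioo_of_strictAntiOn h hm]

theorem injOn_sub_comp_add_const {f f' : ℝ → ℝ} {U I : Set ℝ} {s : ℝ} (hs : s ≠ 0)
    (hf : ∀ t ∈ U, HasDerivAt f (f' t) t) (hf' : InjOn f' U) (hI : I.OrdConnected)
    (hIU : ∀ u ∈ I, u ∈ U ∧ u + s ∈ U) :
    InjOn (fun u => f (u + s) - f u) I := by
  have hg : ∀ u ∈ I, HasDerivAt (fun u => f (u + s) - f u) (f' (u + s) - f' u) u :=
    fun u hu => ((hf _ (hIU u hu).2).comp_add_const u s).sub (hf u (hIU u hu).1)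
  have key : ∀ u₁ ∈ I, ∀ u₂ ∈ I, u₁ < u₂ → f (u₁ + s) - f u₁ ≠ f (u₂ + s) - f u₂ := by
    intro u₁ h₁ u₂ h₂ hlt heq
    have hsub : Icc u₁ u₂ ⊆ I := hI.out h₁ h₂
    obtain ⟨c, hc, hc0⟩ := exists_hasDerivAt_eq_zero hlt
      (fun x hx => (hg x (hsub hx)).continuousAt.continuousWithinAt) heq
      (fun x hx => hg x (hsub (Ioo_subset_Icc_self hx)))
    have hcI := hIU c (hsub (Ioo_subset_Icc_self hc))
    exact hs (by linarith [hf' hcI.2 hcI.1 (sub_eq_zero.mp hc0)])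
  intro u₁ h₁ u₂ h₂ heq
  rcases lt_trichotomy u₁ u₂ with hlt | rfl | hgt
  · exact absurd heq (key u₁ h₁ u₂ h₂ hlt)
  · rfl
  · exact absurd heq.symm (key u₂ h₂ u₁ h₁ hgt)

theorem interior_graphSub_image_Icc_subset {f f' : ℝ → ℝ} {a b a' b' : ℝ}
    (hsub : Icc a' b' ⊆ Icc a b) (hf : ∀ t ∈ Icc a b, HasDerivAt f (f' t) t)
    (hf' : InjOn f' (Icc a b)) :
    interior (graphSub f '' Icc a b ×ˢ Icc a' b') ⊆
      graphSub f '' Ioo a b ×ˢ Ioo a' b' \ {0} := by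
  rintro ⟨s, v⟩ hp
  have hv : v ∈ interior ((fun u => f (u + s) - f u) '' ((· + s) ⁻¹' Icc a b ∩ Icc a' b')) := by
    rw [← preimage_mk_graphSub_image]
    exact preimage_interior_subset_interior_preimage (continuous_const.prodMk continuous_id) hp
  have hs : s ≠ 0 := by
    rintro rfl
    have hzero : (fun u => f (u + 0) - f u) '' ((· + 0) ⁻¹' Icc a b ∩ Icc a' b') ⊆ {0} := by
      rintro _ ⟨u, -, rfl⟩
      simp
    simpa using interior_mono hzero hv
  rw [preimage_add_const_Icc, Icc_inter_Icc] at hv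
  have hI : ∀ u ∈ Icc ((a - s) ⊔ a') ((b - s) ⊓ b'), u ∈ Icc a b ∧ u + s ∈ Icc a b := by
    intro u hu
    simp only [mem_Icc, max_le_iff, le_min_iff] at hu
    exact ⟨hsub ⟨hu.1.2, hu.2.2⟩, by constructor <;> linarith⟩
  have hinj := injOn_sub_comp_add_const hs hf hf' ordConnected_Icc hI
  have hcont : ContinuousOn (fun u => f (u + s) - f u) (Icc ((a - s) ⊔ a') ((b - s) ⊓ b')) :=
    fun u hu => (((hf _ (hI u hu).2).comp_add_const u s).sub
      (hf u (hI u hu).1)).continuousAt.continuousWithinAt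
  obtain ⟨u, hu, rfl⟩ := interior_image_Icc_subset_image_Ioo hcont hinj hv
  refine ⟨?_, fun h0 => hs (congrArg Prod.fst h0)⟩
  rw [← mem_preimage (f := Prod.mk s), preimage_mk_graphSub_image, preimage_add_const_Ioo,
    Ioo_inter_Ioo]
  exact mem_image_of_mem _ hu

theorem graphSub_mem_interior_image {f f' : ℝ → ℝ} {a b a' b' t u : ℝ}
    (hsub : Icc a' b' ⊆ Icc a b) (hf : ∀ t ∈ Icc a b, HasDerivAt f (f' t) t)
    (hcont : ContinuousOn f' (Icc a b)) (hf' : InjOn f' (Icc a b))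
    (ht : t ∈ Ioo a b) (hu : u ∈ Ioo a' b') (htu : t ≠ u) :
    graphSub f (t, u) ∈ interior (graphSub f '' Icc a b ×ˢ Icc a' b') := by
  have hab' : a' ≤ b' := (hu.1.trans hu.2).le
  have hu' : u ∈ Ioo a b := Ioo_subset_Ioo (hsub ⟨le_rfl, hab'⟩).1 (hsub ⟨hab', le_rfl⟩).2 hu
  have hstrict : ∀ x ∈ Ioo a b, HasStrictDerivAt f (f' x) x := fun x hx =>
    hasStrictDerivAt_of_hasDerivAt_of_continuousAt
      (eventually_of_mem (Ioo_mem_nhds hx.1 hx.2) fun y hy => hf y (Ioo_subset_Icc_self hy))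
      (hcont.continuousAt (Icc_mem_nhds hx.1 hx.2))
  refine mem_interior_iff_mem_nhds.mpr (mem_of_superset ?_
    (image_mono (prod_mono Ioo_subset_Icc_self Ioo_subset_Icc_self)))
  exact graphSub_image_mem_nhds (Ioo_mem_nhds ht.1 ht.2) (Ioo_mem_nhds hu.1 hu.2)
    (hstrict t ht) (hstrict u hu')
    (hf'.ne (Ioo_subset_Icc_self ht) (Ioo_subset_Icc_self hu') htu)

theorem stmt7 (a b a' b' : ℝ) (ha'b' : a' < b')
    (hsub : Set.Icc a' b' ⊆ Set.Icc a b)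
    (f f' : ℝ → ℝ)
    (hderiv : ∀ t ∈ Set.Icc a b, HasDerivAt f (f' t) t)
    (hcont : ContinuousOn f' (Set.Icc a b))
    (hmono : StrictMonoOn f' (Set.Icc a b) ∨ StrictAntiOn f' (Set.Icc a b)) :
    interior ((fun t => (t, f t)) '' Set.Icc a b - (fun t => (t, f t)) '' Set.Icc a' b') =
      ((fun t => (t, f t)) '' Set.Ioo a b - (fun t => (t, f t)) '' Set.Ioo a' b') \ {0} ∧
    (interior
      ((fun t => (t, f t)) '' Set.Icc a b - (fun t => (t, f t)) '' Set.Icc a' b')).Nonempty := by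
  simp only [image_graph_sub_image_graph]
  have hinj : InjOn f' (Icc a b) := hmono.elim StrictMonoOn.injOn StrictAntiOn.injOn
  refine ⟨(interior_graphSub_image_Icc_subset hsub hderiv hinj).antisymm ?_, ?_⟩
  · rintro _ ⟨⟨⟨t, u⟩, ⟨ht, hu⟩, rfl⟩, h0⟩
    refine graphSub_mem_interior_image hsub hderiv hcont hinj ht hu fun htu => h0 ?_
    simp [graphSub, htu]
  · have ht : (3 * a' + b') / 4 ∈ Ioo a b :=
      Ioo_subset_Ioo (hsub ⟨le_rfl, ha'b'.le⟩).1 (hsub ⟨ha'b'.le, le_rfl⟩).2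
        ⟨by linarith, by linarith⟩
    have hu : (a' + b') / 2 ∈ Ioo a' b' := ⟨by linarith, by linarith⟩
    exact ⟨_, graphSub_mem_interior_image hsub hderiv hcont hinj ht hu (by linarith)⟩
end
end

section
/- Let f : [a,b] → ℝ be C¹ with f' strictly monotone and Γ = {(t,f(t)) : t ∈ [a,b]}. Let γ be a compact connected subset of −Γ containing more than one point. For any ε, δ > 0 there exists a polygonal curve P contained in the open δ-neighborhood of γ such that: (a) each segment of P is tangent to γ and has length < ε; and (b) for every α ∈ ℝ, Φ_α(P ∩ dom Φ_α) ⊇ Φ_α(γ ∩ dom Φ_α), where Φ_α(x₁,x₂) = x₂ + f(α − x₁). -/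
open Real MeasureTheory Set Filter
open scoped Pointwise ENNReal

noncomputable section

/-!
Write `γ` as the graph of `g u = -f (-u)` over `[p, q]` and pick `ζ = ±1` with `ζ f'` monotone,
so that `ζ g` is concave and `γ` lies on one side of each of its tangent lines. Tangent lines at
consecutive points of a fine partition of `[p, q]` therefore meet between these points, and the
polygon through the meeting points is the graph of a continuous `P` with `ζ g ≤ ζ P` and `P = g`
at `p` and `q`. On `γ`, `Φ_α (u, g u) = g u - g (u - α)` is the vertical distance between `γ` and
its translate by `α`; by concavity of `ζ g` it is monotone in `u`, in a direction fixed by the signs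
of `ζ` and `α`. So each value of `Φ_α` on `γ` lies between its value at one endpoint, where `P`
meets `γ`, and its value at the point of the polygon straight above or below, and is taken on the
polygon by the intermediate value theorem.
-/

theorem elen_mk_mul_le (x k : ℝ) : elen (x, k * x) ≤ (1 + |k|) * |x| := by
  have h : x ^ 2 + (k * x) ^ 2 ≤ ((1 + |k|) * |x|) ^ 2 := by
    have : ((1 + |k|) * |x|) ^ 2 = x ^ 2 + (k * x) ^ 2 + 2 * |k| * x ^ 2 := by
      rw [mul_pow, sq_abs, add_sq, sq_abs]; ring
    nlinarith [abs_nonneg k, sq_nonneg x]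
  calc elen (x, k * x) ≤ √(((1 + |k|) * |x|) ^ 2) := Real.sqrt_le_sqrt h
    _ = (1 + |k|) * |x| := Real.sqrt_sq (by positivity)

theorem Icc_subset_biUnion_Icc {X : Type*} [LinearOrder X] (N : ℕ) (a : ℕ → X) :
    Icc (a 0) (a (N + 1)) ⊆ ⋃ i ∈ Finset.range (N + 1), Icc (a i) (a (i + 1)) := by
  induction N with
  | zero => simp
  | succ N ih => calc
    _ ⊆ Icc (a 0) (a (N + 1)) ∪ Icc (a (N + 1)) (a (N + 2)) := Icc_subset_Icc_union_Icc
    _ ⊆ _ := by simpa [Finset.range_add_one] using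
                  union_subset_union_right (Icc (a (N + 1)) (a (N + 2))) ih

theorem mem_uIcc_of_mul_sub_nonneg {ζ x y z : ℝ} (hζ : ζ ≠ 0) (h₁ : 0 ≤ ζ * (y - x))
    (h₂ : 0 ≤ ζ * (z - y)) : y ∈ uIcc x z := by
  rcases hζ.lt_or_gt with hζ | hζ
  · exact mem_uIcc.2 (Or.inr ⟨by nlinarith, by nlinarith⟩)
  · exact mem_uIcc.2 (Or.inl ⟨by nlinarith, by nlinarith⟩)

theorem exists_monotone_partition_step_le {p q r : ℝ} (hpq : p ≤ q) (hr : 0 < r) :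
    ∃ (N : ℕ) (t : ℕ → ℝ), Monotone t ∧ t 0 = p ∧ t N = q ∧ (∀ j, t j ≤ q) ∧
      ∀ j, t (j + 1) ≤ t j + r := by
  refine ⟨⌈(q - p) / r⌉₊, fun j => min (p + j * r) q, fun i j hij => ?_, by simp [hpq],
    min_eq_right ?_, fun j => min_le_right _ _, fun j => ?_⟩
  · exact min_le_min_right q (by have := hr.le; gcongr)
  · have := Nat.le_ceil ((q - p) / r)
    rw [div_le_iff₀ hr] at this
    linarith
  · push_cast
    rw [← min_add_add_right]
    exact min_le_min (by linarith) (by linarith)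

theorem neg_image_graph (f : ℝ → ℝ) (a b : ℝ) :
    (fun x : ℝ × ℝ => -x) '' ((fun t => (t, f t)) '' Icc a b) =
      (fun u => (u, -f (-u))) '' Icc (-b) (-a) := by
  rw [image_image, ← image_neg_Icc, image_image]
  simp

theorem exists_eq_image_Icc_of_subset_range {g : ℝ → ℝ} {γ : Set (ℝ × ℝ)} (hc : IsCompact γ)
    (hconn : IsConnected γ) (hnt : γ.Nontrivial) (hγ : γ ⊆ range fun u => (u, g u)) :
    ∃ p q, p < q ∧ γ = (fun u => (u, g u)) '' Icc p q := by
  set S := Prod.fst '' γ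
  have hγS : γ = (fun u => (u, g u)) '' S := by
    ext x
    refine ⟨fun hx => ⟨x.1, mem_image_of_mem _ hx, ?_⟩, ?_⟩
    · obtain ⟨u, rfl⟩ := hγ hx; rfl
    · rintro ⟨_, ⟨y, hy, rfl⟩, rfl⟩
      obtain ⟨u, rfl⟩ := hγ hy
      exact hy
  have hS : S = Icc (sInf S) (sSup S) :=
    eq_Icc_of_connected_compact (hconn.image _ continuous_fst.continuousOn)
      (hc.image continuous_fst)
  refine ⟨sInf S, sSup S, ?_, hS ▸ hγS⟩
  have hinj : InjOn Prod.fst γ := fun x hx y hy hxy => by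
    obtain ⟨u, rfl⟩ := hγ hx
    obtain ⟨v, rfl⟩ := hγ hy
    obtain rfl : u = v := hxy
    rfl
  have hSnt : S.Nontrivial := hnt.image_of_injOn hinj
  rw [hS] at hSnt
  obtain ⟨x, hx, y, hy, hxy⟩ := hSnt
  by_contra! h
  exact hxy (le_antisymm (by linarith [hx.2, hy.1]) (by linarith [hx.1, hy.2]))

section ConvexDeriv

variable {F F' : ℝ → ℝ} {a b : ℝ}

theorem add_mul_sub_le_of_monotoneOn_deriv (hF : ∀ u ∈ Icc a b, HasDerivAt F (F' u) u)
    (hF' : MonotoneOn F' (Icc a b)) {x y : ℝ} (hx : x ∈ Icc a b) (hy : y ∈ Icc a b) :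
    F x + F' x * (y - x) ≤ F y := by
  have hG : ∀ u ∈ Icc a b, HasDerivAt (fun u => F u - F' x * u) (F' u - F' x) u := fun u hu =>
    ((hF u hu).sub ((hasDerivAt_id' u).const_mul (F' x))).congr_deriv (by ring)
  have hGc : ContinuousOn (fun u => F u - F' x * u) (Icc a b) := fun u hu =>
    (hG u hu).continuousAt.continuousWithinAt
  rcases le_total x y with hxy | hyx
  · have := monotoneOn_of_hasDerivWithinAt_nonneg (convex_Icc x b)
      (hGc.mono (Icc_subset_Icc_left hx.1))
      (fun u hu => (hG u (Icc_subset_Icc_left hx.1 (interior_subset hu))).hasDerivWithinAt)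
      (fun u hu => by
        rw [interior_Icc] at hu
        exact sub_nonneg.2 (hF' hx ⟨hx.1.trans hu.1.le, hu.2.le⟩ hu.1.le))
      ⟨le_rfl, hx.2⟩ ⟨hxy, hy.2⟩ hxy
    linarith
  · have := antitoneOn_of_hasDerivWithinAt_nonpos (convex_Icc a x)
      (hGc.mono (Icc_subset_Icc_right hx.2))
      (fun u hu => (hG u (Icc_subset_Icc_right hx.2 (interior_subset hu))).hasDerivWithinAt)
      (fun u hu => by
        rw [interior_Icc] at hu
        exact sub_nonpos.2 (hF' ⟨hu.1.le, hu.2.le.trans hx.2⟩ hx hu.2.le))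
      ⟨hy.1, hyx⟩ ⟨hx.1, le_rfl⟩ hyx
    linarith

theorem sub_le_sub_of_monotoneOn_deriv (hF : ∀ u ∈ Icc a b, HasDerivAt F (F' u) u)
    (hF' : MonotoneOn F' (Icc a b)) {x y x' y' : ℝ} (ha : a ≤ x) (hxy : x ≤ y) (hxx' : x ≤ x')
    (hy' : y' ≤ b) (h : x' - x = y' - y) : F x' - F x ≤ F y' - F y := by
  set d := x' - x
  have hG : ∀ u ∈ Icc x y, HasDerivAt (fun u => F (u + d) - F u) (F' (u + d) - F' u) u :=
    fun u hu => by
      have hd := (hF (u + d) ⟨by linarith [hu.1], by linarith [hu.2]⟩).comp u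
        ((hasDerivAt_id u).add_const d)
      exact (hd.sub (hF u ⟨by linarith [hu.1], by linarith [hu.2]⟩)).congr_deriv (by ring)
  have := monotoneOn_of_hasDerivWithinAt_nonneg (convex_Icc x y)
    (fun u hu => (hG u hu).continuousAt.continuousWithinAt)
    (fun u hu => (hG u (interior_subset hu)).hasDerivWithinAt)
    (fun u hu => by
      rw [interior_Icc] at hu
      exact sub_nonneg.2 (hF' ⟨by linarith [hu.1], by linarith [hu.2]⟩
        ⟨by linarith [hu.1], by linarith [hu.2]⟩ (by linarith)))
    ⟨le_rfl, hxy⟩ ⟨hxy, le_rfl⟩ hxy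
  simpa [d, show y + (x' - x) = y' by linarith] using this

end ConvexDeriv

section Glue

variable {α β : Type*} [LinearOrder α] {c : ℕ → α} {ℓ : ℕ → α → β}

def gluePieces (c : ℕ → α) (ℓ : ℕ → α → β) : ℕ → α → β
  | 0, u => ℓ 0 u
  | n + 1, u => if u ≤ c (n + 1) then gluePieces c ℓ n u else ℓ (n + 1) u

theorem gluePieces_eq (hc : Monotone c) (hℓ : ∀ j, ℓ j (c (j + 1)) = ℓ (j + 1) (c (j + 1)))
    {n j : ℕ} (hj : j ≤ n) {u : α} (hu : u ∈ Icc (c j) (c (j + 1))) :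
    gluePieces c ℓ n u = ℓ j u := by
  induction n generalizing j with
  | zero => obtain rfl := Nat.le_zero.1 hj; rfl
  | succ n ih =>
    rcases hj.lt_or_eq with hj | rfl
    · rw [gluePieces, if_pos (hu.2.trans (hc hj))]
      exact ih (Nat.lt_succ_iff.1 hj) hu
    · by_cases h : u ≤ c (n + 1)
      · obtain rfl := le_antisymm h hu.1
        rw [gluePieces, if_pos h, ih le_rfl ⟨hc n.le_succ, le_rfl⟩, hℓ]
      · rw [gluePieces, if_neg h]

theorem continuous_gluePieces [TopologicalSpace α] [OrderClosedTopology α] [TopologicalSpace β]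
    (hc : Monotone c) (hℓ : ∀ j, ℓ j (c (j + 1)) = ℓ (j + 1) (c (j + 1)))
    (hℓc : ∀ j, Continuous (ℓ j)) (n : ℕ) : Continuous (gluePieces c ℓ n) := by
  induction n with
  | zero => exact hℓc 0
  | succ n ih =>
    refine Continuous.if_le ih (hℓc _) continuous_id continuous_const
      fun u (hu : u = c (n + 1)) => ?_
    rw [hu, gluePieces_eq hc hℓ le_rfl ⟨hc n.le_succ, le_rfl⟩, hℓ]

end Glue

def tangentLine (g m : ℝ → ℝ) (t u : ℝ) : ℝ := g t + m t * (u - t)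

theorem tangentLine_sub_tangentLine (g m : ℝ → ℝ) (t u v : ℝ) :
    tangentLine g m t v - tangentLine g m t u = m t * (v - u) := by
  unfold tangentLine; ring

theorem continuous_tangentLine (g m : ℝ → ℝ) (t : ℝ) : Continuous (tangentLine g m t) := by
  unfold tangentLine; fun_prop

theorem segment_tangentLine (g m : ℝ → ℝ) (t : ℝ) {u v : ℝ} (huv : u ≤ v) :
    segment ℝ (u, tangentLine g m t u) (v, tangentLine g m t v) =
      (fun w => (w, tangentLine g m t w)) '' Icc u v := by
  have hL : (fun w => (w, tangentLine g m t w)) =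
      AffineMap.lineMap ((0 : ℝ), g t - m t * t) (1, g t - m t * t + m t) := by
    ext w <;> simp [AffineMap.lineMap_apply, tangentLine]
    ring
  rw [← segment_eq_Icc huv, hL, image_segment, ← hL]

@[simp]
theorem tangentLine_self (g m : ℝ → ℝ) (t : ℝ) : tangentLine g m t t = g t := by
  simp [tangentLine]

theorem elen_sub_tangentLine_le (g m : ℝ → ℝ) (t u v : ℝ) :
    elen ((v, tangentLine g m t v) - (u, tangentLine g m t u)) ≤ (1 + |m t|) * |v - u| := by
  rw [Prod.mk_sub_mk, tangentLine_sub_tangentLine]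
  exact elen_mk_mul_le _ _

theorem exists_tangentLine_eq {g m : ℝ → ℝ} {p q ζ : ℝ} (hζ : ζ ≠ 0)
    (htan : ∀ t ∈ Icc p q, ∀ u ∈ Icc p q, ζ * g u ≤ ζ * tangentLine g m t u)
    {x y : ℝ} (hx : x ∈ Icc p q) (hy : y ∈ Icc p q) (hxy : x ≤ y) :
    ∃ d ∈ Icc x y, tangentLine g m x d = tangentLine g m y d := by
  have h0 : (0 : ℝ) ∈ uIcc (tangentLine g m x x - tangentLine g m y x)
      (tangentLine g m x y - tangentLine g m y y) := by
    refine mem_uIcc_of_mul_sub_nonneg hζ ?_ ?_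
    · rw [tangentLine_self]; linear_combination htan y hy x hx
    · rw [tangentLine_self]; linear_combination htan x hx y hy
  obtain ⟨d, hd, hd0⟩ := intermediate_value_uIcc
    ((continuous_tangentLine g m x).sub (continuous_tangentLine g m y)).continuousOn h0
  rw [uIcc_of_le hxy] at hd
  exact ⟨d, hd, sub_eq_zero.1 hd0⟩

/-- A polygon with `N + 1` sides, side `j` lying over `[c j, c (j + 1)]` on the tangent line to
the graph of `g` (with slope function `m`) at `t j`. -/
structure TangentPolygon (g m : ℝ → ℝ) (p q r : ℝ) where
  N : ℕ
  t : ℕ → ℝ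
  c : ℕ → ℝ
  t_mem : ∀ j, t j ∈ Icc p q
  t_zero : t 0 = p
  t_N : t N = q
  c_zero : c 0 = p
  c_succ_N : c (N + 1) = q
  monotone_c : Monotone c
  abs_sub_t_le : ∀ j, ∀ u ∈ Icc (c j) (c (j + 1)), |u - t j| ≤ r
  tangentLine_eq : ∀ j, tangentLine g m (t j) (c (j + 1)) = tangentLine g m (t (j + 1)) (c (j + 1))

namespace TangentPolygon

variable {g m : ℝ → ℝ} {p q r : ℝ}

theorem nonempty {ζ : ℝ} (hpq : p ≤ q) (hr : 0 < r) (hζ : ζ ≠ 0)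
    (htan : ∀ t ∈ Icc p q, ∀ u ∈ Icc p q, ζ * g u ≤ ζ * tangentLine g m t u) :
    Nonempty (TangentPolygon g m p q r) := by
  obtain ⟨N, t, ht, ht0, htN, htq, hstep⟩ := exists_monotone_partition_step_le hpq hr
  have htmem : ∀ j, t j ∈ Icc p q := fun j => ⟨ht0 ▸ ht (Nat.zero_le j), htq j⟩
  choose d hd hdeq using fun j =>
    exists_tangentLine_eq hζ htan (htmem j) (htmem (j + 1)) (ht j.le_succ)
  let c : ℕ → ℝ := fun
    | 0 => p
    | j + 1 => d j
  have hc : Monotone c := monotone_nat_of_le_succ fun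
    | 0 => show p ≤ d 0 from ht0 ▸ (hd 0).1
    | j + 1 => (hd j).2.trans (hd (j + 1)).1
  have hlow : ∀ j, t j - r ≤ c j := fun
    | 0 => by simp [c, ht0, hr.le]
    | j + 1 => by linarith [(hd j).1, hstep j, show c (j + 1) = d j from rfl]
  refine ⟨⟨N, t, c, htmem, ht0, htN, rfl, le_antisymm ((hd N).2.trans (htq _)) (htN ▸ (hd N).1),
    hc, fun j u hu => abs_sub_le_iff.2 ⟨?_, by linarith [hlow j, hu.1]⟩, hdeq⟩⟩
  linarith [hu.2, (hd j).2, hstep j, show c (j + 1) = d j from rfl]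

variable (P : TangentPolygon g m p q r)

def fn : ℝ → ℝ := gluePieces P.c (fun j => tangentLine g m (P.t j)) P.N

def vertex (j : ℕ) : ℝ × ℝ := (P.c j, P.fn (P.c j))

def curve : Set (ℝ × ℝ) :=
  ⋃ i ∈ Finset.range (P.N + 1), segment ℝ (P.vertex i) (P.vertex (i + 1))

theorem fn_eq {j : ℕ} (hj : j ≤ P.N) {u : ℝ} (hu : u ∈ Icc (P.c j) (P.c (j + 1))) :
    P.fn u = tangentLine g m (P.t j) u :=
  gluePieces_eq P.monotone_c P.tangentLine_eq hj hu

theorem continuous_fn : Continuous P.fn :=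
  continuous_gluePieces P.monotone_c P.tangentLine_eq (fun _ => continuous_tangentLine _ _ _) _

theorem fn_left : P.fn p = g p := by
  rw [P.fn_eq (Nat.zero_le _) ⟨P.c_zero.le, P.c_zero.symm.trans_le (P.monotone_c (Nat.zero_le 1))⟩,
    P.t_zero, tangentLine_self]

theorem fn_right : P.fn q = g q := by
  rw [P.fn_eq le_rfl ⟨(P.monotone_c P.N.le_succ).trans_eq P.c_succ_N, P.c_succ_N.ge⟩, P.t_N,
    tangentLine_self]

theorem exists_mem_Icc_c {u : ℝ} (hu : u ∈ Icc p q) :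
    ∃ j ≤ P.N, u ∈ Icc (P.c j) (P.c (j + 1)) := by
  have hu' : u ∈ Icc (P.c 0) (P.c (P.N + 1)) := by rwa [P.c_zero, P.c_succ_N]
  obtain ⟨j, hj, hu⟩ := mem_iUnion₂.1 (Icc_subset_biUnion_Icc P.N P.c hu')
  exact ⟨j, Nat.lt_succ_iff.1 (Finset.mem_range.1 hj), hu⟩

theorem segment_vertex {j : ℕ} (hj : j ≤ P.N) :
    segment ℝ (P.vertex j) (P.vertex (j + 1)) =
      (fun u => (u, tangentLine g m (P.t j) u)) '' Icc (P.c j) (P.c (j + 1)) := by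
  have hc := P.monotone_c j.le_succ
  rw [vertex, vertex, P.fn_eq hj ⟨le_rfl, hc⟩, P.fn_eq hj ⟨hc, le_rfl⟩]
  exact segment_tangentLine g m _ hc

theorem mem_segment_vertex_iff {j : ℕ} (hj : j ≤ P.N) {w : ℝ × ℝ} :
    w ∈ segment ℝ (P.vertex j) (P.vertex (j + 1)) ↔
      ∃ u ∈ Icc (P.c j) (P.c (j + 1)), (u, tangentLine g m (P.t j) u) = w := by
  rw [P.segment_vertex hj]; rfl

theorem mk_fn_mem_curve {u : ℝ} (hu : u ∈ Icc p q) : (u, P.fn u) ∈ P.curve := by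
  obtain ⟨j, hj, hu⟩ := P.exists_mem_Icc_c hu
  refine mem_iUnion₂.2 ⟨j, Finset.mem_range.2 (Nat.lt_succ_of_le hj), ?_⟩
  rw [P.fn_eq hj hu]
  exact (P.mem_segment_vertex_iff hj).2 ⟨u, hu, rfl⟩

theorem mul_le_mul_fn_of_tangent {ζ : ℝ}
    (htan : ∀ t ∈ Icc p q, ∀ u ∈ Icc p q, ζ * g u ≤ ζ * tangentLine g m t u)
    {u : ℝ} (hu : u ∈ Icc p q) : ζ * g u ≤ ζ * P.fn u := by
  obtain ⟨j, hj, hjc⟩ := P.exists_mem_Icc_c hu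
  rw [P.fn_eq hj hjc]
  exact htan _ (P.t_mem j) u hu

theorem snd_eq_of_mem_segment {j : ℕ} (hj : j ≤ P.N) {w : ℝ × ℝ}
    (hw : w ∈ segment ℝ (P.vertex j) (P.vertex (j + 1))) :
    w.2 = g (P.t j) + m (P.t j) * (w.1 - P.t j) := by
  obtain ⟨u, -, rfl⟩ := (P.mem_segment_vertex_iff hj).1 hw
  rfl

theorem curve_subset_enbhd {M δ : ℝ} (hm : ∀ s ∈ Icc p q, |m s| ≤ M) (hδ : (1 + M) * r < δ) :
    P.curve ⊆ enbhd δ ((fun u => (u, g u)) '' Icc p q) := by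
  intro w hw
  obtain ⟨j, hj, hw⟩ := mem_iUnion₂.1 hw
  have hjN := Nat.lt_succ_iff.1 (Finset.mem_range.1 hj)
  obtain ⟨u, hu, rfl⟩ := (P.mem_segment_vertex_iff hjN).1 hw
  refine ⟨_, mem_image_of_mem _ (P.t_mem j), ?_⟩
  have hmj := hm _ (P.t_mem j)
  calc _ ≤ (1 + |m (P.t j)|) * |u - P.t j| := by
        simpa using elen_sub_tangentLine_le g m (P.t j) (P.t j) u
    _ ≤ (1 + M) * r := mul_le_mul (by linarith) (P.abs_sub_t_le j u hu) (abs_nonneg _)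
        (by linarith [abs_nonneg (m (P.t j))])
    _ < δ := hδ

theorem elen_vertex_sub_le {M : ℝ} (hm : ∀ s ∈ Icc p q, |m s| ≤ M) {j : ℕ}
    (hj : j ≤ P.N) :
    elen (P.vertex (j + 1) - P.vertex j) ≤ (1 + M) * (2 * r) := by
  have hc := P.monotone_c j.le_succ
  have h₁ := P.abs_sub_t_le j _ ⟨le_rfl, hc⟩
  have h₂ := P.abs_sub_t_le j _ ⟨hc, le_rfl⟩
  have hmj := hm _ (P.t_mem j)
  rw [vertex, vertex, P.fn_eq hj ⟨le_rfl, hc⟩, P.fn_eq hj ⟨hc, le_rfl⟩]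
  refine (elen_sub_tangentLine_le g m _ _ _).trans (mul_le_mul (by linarith) ?_ (abs_nonneg _)
    (by linarith [abs_nonneg (m (P.t j))]))
  calc |P.c (j + 1) - P.c j| ≤ |P.c (j + 1) - P.t j| + |P.t j - P.c j| := abs_sub_le _ _ _
    _ ≤ 2 * r := by rw [abs_sub_comm (P.t j)]; linarith

end TangentPolygon

section Strip

variable {f f' : ℝ → ℝ} {a b ζ : ℝ}

theorem mul_le_mul_tangentLine_neg (hderiv : ∀ x ∈ Icc a b, HasDerivAt f (f' x) x)
    (hmono : MonotoneOn (fun x => ζ * f' x) (Icc a b)) {t u : ℝ} (ht : -t ∈ Icc a b)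
    (hu : -u ∈ Icc a b) :
    ζ * -f (-u) ≤ ζ * tangentLine (fun u => -f (-u)) (fun u => f' (-u)) t u := by
  have := add_mul_sub_le_of_monotoneOn_deriv (fun x hx => (hderiv x hx).const_mul ζ) hmono ht hu
  unfold tangentLine
  linear_combination this

theorem exists_mem_strip_eq_of_envelope (hderiv : ∀ x ∈ Icc a b, HasDerivAt f (f' x) x)
    (hζ : ζ ≠ 0) (hmono : MonotoneOn (fun x => ζ * f' x) (Icc a b)) {p q α y : ℝ}
    (hp : -b ≤ p) (hq : q ≤ -a) {P : ℝ → ℝ} (hP : Continuous P) (hPp : P p = -f (-p))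
    (hPq : P q = -f (-q)) (hle : ∀ u ∈ Icc p q, ζ * -f (-u) ≤ ζ * P u)
    (hy : y ∈ Icc p q ∩ Icc (α - b) (α - a)) :
    ∃ u ∈ Icc p q ∩ Icc (α - b) (α - a), P u + f (α - u) = -f (-y) + f (α - y) := by
  have hF : ∀ x ∈ Icc a b, HasDerivAt (fun x => ζ * f x) (ζ * f' x) x := fun x hx =>
    (hderiv x hx).const_mul ζ
  obtain ⟨e, he, hPe, hde⟩ : ∃ e ∈ Icc p q ∩ Icc (α - b) (α - a),
      P e = -f (-e) ∧ ζ * (-f (-e) + f (α - e)) ≤ ζ * (-f (-y) + f (α - y)) := by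
    obtain ⟨⟨hpy, hyq⟩, hby, hya⟩ := hy
    rcases le_total α 0 with hα | hα
    · refine ⟨p, ⟨⟨le_rfl, hpy.trans hyq⟩, by linarith, hpy.trans hya⟩, hPp, ?_⟩
      have := sub_le_sub_of_monotoneOn_deriv hF hmono (x := α - y) (y := α - p) (x' := -y)
        (y' := -p) (by linarith) (by linarith) (by linarith) (by linarith) (by ring)
      linear_combination this
    · refine ⟨q, ⟨⟨hpy.trans hyq, le_rfl⟩, hby.trans hyq, by linarith⟩, hPq, ?_⟩
      have := sub_le_sub_of_monotoneOn_deriv hF hmono (x := -q) (y := -y) (x' := α - q)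
        (y' := α - y) (by linarith) (by linarith) (by linarith) (by linarith) (by ring)
      linear_combination this
  have hz : -f (-y) + f (α - y) ∈ uIcc (P e + f (α - e)) (P y + f (α - y)) :=
    mem_uIcc_of_mul_sub_nonneg hζ (by rw [hPe]; linear_combination hde)
      (by linear_combination hle y hy.1)
  have hsub : uIcc e y ⊆ Icc p q ∩ Icc (α - b) (α - a) :=
    (ordConnected_Icc.inter ordConnected_Icc).uIcc_subset he hy
  have hfc : ContinuousOn f (Icc a b) := fun x hx => (hderiv x hx).continuousAt.continuousWithinAt
  have hcont : ContinuousOn (fun u => P u + f (α - u)) (uIcc e y) :=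
    hP.continuousOn.add (hfc.comp (continuous_const.sub continuous_id).continuousOn
      fun u hu => ⟨by linarith [(hsub hu).2.2], by linarith [(hsub hu).2.1]⟩)
  obtain ⟨u, hu, hval⟩ := intermediate_value_uIcc hcont hz
  exact ⟨u, hsub hu, hval⟩

theorem TangentPolygon.image_strip_subset {m : ℝ → ℝ} {p q r : ℝ}
    (P : TangentPolygon (fun u => -f (-u)) m p q r) (hderiv : ∀ x ∈ Icc a b, HasDerivAt f (f' x) x)
    (hζ : ζ ≠ 0) (hmono : MonotoneOn (fun x => ζ * f' x) (Icc a b)) (hp : -b ≤ p) (hq : q ≤ -a)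
    (htan : ∀ t ∈ Icc p q, ∀ u ∈ Icc p q,
      ζ * -f (-u) ≤ ζ * tangentLine (fun u => -f (-u)) m t u) (α : ℝ) :
    (fun x : ℝ × ℝ => x.2 + f (α - x.1)) ''
        ((fun u => (u, -f (-u))) '' Icc p q ∩ Icc (α - b) (α - a) ×ˢ (univ : Set ℝ)) ⊆
      (fun x : ℝ × ℝ => x.2 + f (α - x.1)) ''
        (P.curve ∩ Icc (α - b) (α - a) ×ˢ (univ : Set ℝ)) := by
  rintro _ ⟨_, ⟨⟨y, hy, rfl⟩, hys, -⟩, rfl⟩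
  obtain ⟨u, hu, hval⟩ := exists_mem_strip_eq_of_envelope hderiv hζ hmono hp hq P.continuous_fn
    P.fn_left P.fn_right (fun u hu => P.mul_le_mul_fn_of_tangent htan hu) ⟨hy, hys⟩
  exact ⟨(u, P.fn u), ⟨P.mk_fn_mem_curve hu.1, hu.2, trivial⟩, hval⟩

end Strip

theorem stmt11_general (a b : ℝ) (f f' : ℝ → ℝ)
    (hderiv : ∀ t ∈ Set.Icc a b, HasDerivAt f (f' t) t)
    (hcont : ContinuousOn f' (Set.Icc a b))
    (hmono : StrictMonoOn f' (Set.Icc a b) ∨ StrictAntiOn f' (Set.Icc a b))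
    (γ : Set (ℝ × ℝ)) (hγc : IsCompact γ) (hγconn : IsConnected γ)
    (hγsub : γ ⊆ (fun x : ℝ × ℝ => -x) '' ((fun t => (t, f t)) '' Set.Icc a b))
    (hγnt : γ.Nontrivial)
    (ε δ : ℝ) (hε : 0 < ε) (hδ : 0 < δ) :
    ∃ (n : ℕ) (v : ℕ → ℝ × ℝ),
      (⋃ i ∈ Finset.range n, segment ℝ (v i) (v (i + 1))) ⊆ enbhd δ γ ∧
      (∀ i < n, elen (v (i + 1) - v i) < ε ∧
        ∃ x ∈ γ, ∀ w ∈ segment ℝ (v i) (v (i + 1)),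
          w.2 = x.2 + f' (-x.1) * (w.1 - x.1)) ∧
      (∀ α : ℝ,
        (fun x : ℝ × ℝ => x.2 + f (α - x.1)) ''
            (γ ∩ Set.Icc (α - b) (α - a) ×ˢ (Set.univ : Set ℝ)) ⊆
          (fun x : ℝ × ℝ => x.2 + f (α - x.1)) ''
            ((⋃ i ∈ Finset.range n, segment ℝ (v i) (v (i + 1))) ∩
              Set.Icc (α - b) (α - a) ×ˢ (Set.univ : Set ℝ))) := by
  obtain ⟨ζ, hζ, hζf'⟩ : ∃ ζ : ℝ, ζ ≠ 0 ∧ MonotoneOn (fun x => ζ * f' x) (Icc a b) := by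
    rcases hmono with h | h
    · exact ⟨1, one_ne_zero, by simpa using h.monotoneOn⟩
    · exact ⟨-1, by norm_num, fun x hx y hy hxy => by simpa using h.antitoneOn hx hy hxy⟩
  rw [neg_image_graph] at hγsub
  obtain ⟨p, q, hpq, rfl⟩ := exists_eq_image_Icc_of_subset_range hγc hγconn hγnt
    (hγsub.trans (image_subset_range _ _))
  obtain ⟨hp, hq⟩ := (Icc_subset_Icc_iff hpq.le).1
    ((image_subset_image_iff fun u v h => congrArg Prod.fst h).1 hγsub)
  have hneg : ∀ u ∈ Icc p q, -u ∈ Icc a b := fun u hu => ⟨by linarith [hu.2], by linarith [hu.1]⟩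
  obtain ⟨M, hM⟩ := isCompact_Icc.exists_bound_of_continuousOn hcont
  have hm : ∀ s ∈ Icc p q, |f' (-s)| ≤ M := fun s hs => hM _ (hneg s hs)
  have hM0 : 0 ≤ M := (abs_nonneg _).trans (hm p ⟨le_rfl, hpq.le⟩)
  obtain ⟨r, hr, hrεδ⟩ := exists_pos_mul_lt (lt_min hε hδ) (2 * (1 + M))
  have htan : ∀ t ∈ Icc p q, ∀ u ∈ Icc p q,
      ζ * -f (-u) ≤ ζ * tangentLine (fun u => -f (-u)) (fun u => f' (-u)) t u :=
    fun t ht u hu => mul_le_mul_tangentLine_neg hderiv hζf' (hneg t ht) (hneg u hu)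
  obtain ⟨P⟩ := TangentPolygon.nonempty hpq.le hr hζ htan
  refine ⟨P.N + 1, P.vertex, P.curve_subset_enbhd hm (by nlinarith [min_le_right ε δ]),
    fun i hi => ⟨(P.elen_vertex_sub_le hm (Nat.lt_succ_iff.1 hi)).trans_lt
      (by nlinarith [min_le_left ε δ]), _, mem_image_of_mem _ (P.t_mem i),
      fun w hw => P.snd_eq_of_mem_segment (Nat.lt_succ_iff.1 hi) hw⟩,
    P.image_strip_subset hderiv hζ hζf' hp hq htan⟩

theorem stmt11 (a b : ℝ) (hab : a ≤ b) (f f' : ℝ → ℝ)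
    (hderiv : ∀ t ∈ Set.Icc a b, HasDerivAt f (f' t) t)
    (hcont : ContinuousOn f' (Set.Icc a b))
    (hmono : StrictMonoOn f' (Set.Icc a b) ∨ StrictAntiOn f' (Set.Icc a b))
    (γ : Set (ℝ × ℝ)) (hγc : IsCompact γ) (hγconn : IsConnected γ)
    (hγsub : γ ⊆ (fun x : ℝ × ℝ => -x) '' ((fun t => (t, f t)) '' Set.Icc a b))
    (hγnt : γ.Nontrivial)
    (ε δ : ℝ) (hε : 0 < ε) (hδ : 0 < δ) :
    ∃ (n : ℕ) (v : ℕ → ℝ × ℝ),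
      (⋃ i ∈ Finset.range n, segment ℝ (v i) (v (i + 1))) ⊆ enbhd δ γ ∧
      (∀ i < n, elen (v (i + 1) - v i) < ε ∧
        ∃ x ∈ γ, ∀ w ∈ segment ℝ (v i) (v (i + 1)),
          w.2 = x.2 + f' (-x.1) * (w.1 - x.1)) ∧
      (∀ α : ℝ,
        (fun x : ℝ × ℝ => x.2 + f (α - x.1)) ''
            (γ ∩ Set.Icc (α - b) (α - a) ×ˢ (Set.univ : Set ℝ)) ⊆
          (fun x : ℝ × ℝ => x.2 + f (α - x.1)) ''
            ((⋃ i ∈ Finset.range n, segment ℝ (v i) (v (i + 1))) ∩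
              Set.Icc (α - b) (α - a) ×ˢ (Set.univ : Set ℝ))) :=
  stmt11_general a b f f' hderiv hcont hmono γ hγc hγconn hγsub hγnt ε δ hε hδ
end
end

section
/- Let Φ : ℝ² → set of ℝ² be defined by Φ(E) = E + Γ where Γ is the graph of a C¹ function f : [a,b] → ℝ. If D is an open disk in the plane with closure D̄, then Φ(D̄) \ Φ(D) has two-dimensional Lebesgue measure zero. More precisely, the intersection of Φ(D̄) \ Φ(D) with any vertical line contains at most two points. -/
open Real MeasureTheory Set Filter
open scoped Pointwise ENNReal

noncomputable section

/-! On the line `{α} × ℝ`, the slice of `E + Γ` is the image of `E ∩ {x | α - x.1 ∈ [a, b]}`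
under `x ↦ x.2 + f (α - x.1)`. For the open disk `B` this intersection is convex, so its image
`I` is an interval. If it is nonempty, the slice of `closure B + Γ` lies in `closure I`, which adds
at most the two endpoints to `I`. If it is empty, `closure B ∩ {x | α - x.1 ∈ [a, b]}` is a convex
subset of the circle, hence at most one point by strict convexity. A Borel set with countable
vertical slices is null by Fubini. -/

theorem Set.OrdConnected.closure_diff_subset {α : Type*} [ConditionallyCompleteLinearOrder α]
    [TopologicalSpace α] [OrderTopology α] {I : Set α} (hI : I.OrdConnected) :
    closure I \ I ⊆ {sInf I, sSup I} := by
  rintro y ⟨hy, hyI⟩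
  have hne : I.Nonempty := closure_nonempty_iff.mp ⟨y, hy⟩
  by_cases hup : y ∈ upperBounds I
  · exact Or.inr ((isLUB_of_mem_closure hup hy).csSup_eq hne).symm
  by_cases hlow : y ∈ lowerBounds I
  · exact Or.inl ((isGLB_of_mem_closure hlow hy).csInf_eq hne).symm
  obtain ⟨q, hq, hyq⟩ : ∃ q ∈ I, y < q := by simpa [mem_upperBounds] using hup
  obtain ⟨p, hp, hpy⟩ : ∃ p ∈ I, p < y := by simpa [mem_lowerBounds] using hlow
  exact absurd (hI.out hp hq ⟨hpy.le, hyq.le⟩) hyI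

theorem Set.OrdConnected.encard_closure_diff_le_two {α : Type*}
    [ConditionallyCompleteLinearOrder α] [TopologicalSpace α] [OrderTopology α] {I : Set α}
    (hI : I.OrdConnected) : (closure I \ I).encard ≤ 2 :=
  calc (closure I \ I).encard ≤ ({sInf I, sSup I} : Set α).encard :=
        encard_le_encard hI.closure_diff_subset
    _ ≤ 2 := (encard_insert_le _ _).trans (by rw [encard_singleton]; rfl)

section Convex

variable {E : Type*} [AddCommGroup E] [Module ℝ E] [TopologicalSpace E]

theorem StrictConvex.subsingleton_of_disjoint_interior {C P : Set E} (hC : StrictConvex ℝ C)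
    (hP : Convex ℝ P) (hPC : P ⊆ C) (hdisj : Disjoint P (interior C)) : P.Subsingleton := by
  intro x hx y hy
  by_contra hxy
  have hmid : midpoint ℝ x y ∈ P ∩ interior C := by
    rw [midpoint_eq_smul_add, smul_add]
    exact ⟨hP hx hy (by norm_num) (by norm_num) (by norm_num),
      hC (hPC hx) (hPC hy) hxy (by norm_num) (by norm_num) (by norm_num)⟩
  exact hdisj.ne_of_mem hmid.1 hmid.2 rfl

variable [IsTopologicalAddGroup E] [ContinuousSMul ℝ E] {B S : Set E}

theorem Convex.closure_inter_subset_closure_inter (hB : Convex ℝ B) (hBo : IsOpen B)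
    (hS : Convex ℝ S) (hne : (B ∩ S).Nonempty) : closure B ∩ S ⊆ closure (B ∩ S) := by
  obtain ⟨p, hpB, hpS⟩ := hne
  rintro x ⟨hxB, hxS⟩
  have hseg : openSegment ℝ x p ⊆ B ∩ S := fun w hw =>
    ⟨hBo.interior_eq ▸ hB.openSegment_closure_interior_subset_interior hxB
      (hBo.interior_eq.symm ▸ hpB) hw, hS.openSegment_subset hxS hpS hw⟩
  exact closure_mono hseg (segment_subset_closure_openSegment (left_mem_segment ℝ x p))

theorem Convex.interior_closure_eq_of_isOpen (hB : Convex ℝ B) (hBo : IsOpen B) :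
    interior (closure B) = B := by
  rcases B.eq_empty_or_nonempty with rfl | hne
  · simp
  rw [hB.interior_closure_eq_interior_of_nonempty_interior (hBo.interior_eq.symm ▸ hne),
    hBo.interior_eq]

theorem encard_image_closure_inter_diff_le_two (hBo : IsOpen B) (hB : Convex ℝ B)
    (hBs : StrictConvex ℝ (closure B)) (hS : Convex ℝ S) (hSc : IsClosed S) {g : E → ℝ}
    (hg : ContinuousOn g S) : (g '' (closure B ∩ S) \ g '' (B ∩ S)).encard ≤ 2 := by
  rcases (B ∩ S).eq_empty_or_nonempty with hempty | hne
  · have hsub : (closure B ∩ S).Subsingleton := by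
      refine hBs.subsingleton_of_disjoint_interior (hB.closure.inter hS) inter_subset_left ?_
      rw [hB.interior_closure_eq_of_isOpen hBo, disjoint_iff_inter_eq_empty, inter_right_comm,
        inter_eq_right.mpr subset_closure, hempty]
    calc _ ≤ (g '' (closure B ∩ S)).encard := encard_le_encard sdiff_subset
      _ ≤ 1 := encard_le_one_iff.mpr fun _ _ hu hv => (hsub.image g) hu hv
      _ ≤ 2 := by norm_num
  · have hgc : ContinuousOn g (closure (B ∩ S)) :=
      hg.mono (closure_minimal inter_subset_right hSc)
    have himage : g '' (closure B ∩ S) ⊆ closure (g '' (B ∩ S)) :=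
      (image_mono (hB.closure_inter_subset_closure_inter hBo hS hne)).trans hgc.image_closure
    have hI : (g '' (B ∩ S)).OrdConnected :=
      ((hB.inter hS).isPreconnected.image g (hg.mono inter_subset_right)).ordConnected
    exact (encard_le_encard (sdiff_subset_sdiff_left himage)).trans
      hI.encard_closure_diff_le_two

end Convex

theorem mk_mem_add_graph_iff {E : Set (ℝ × ℝ)} {s : Set ℝ} {f : ℝ → ℝ} {α y : ℝ} :
    (α, y) ∈ E + (fun t => (t, f t)) '' s ↔
      y ∈ (fun x : ℝ × ℝ => x.2 + f (α - x.1)) '' (E ∩ {x | α - x.1 ∈ s}) := by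
  constructor
  · rintro ⟨x, hx, _, ⟨t, ht, rfl⟩, hsum⟩
    have hfst : x.1 + t = α := congrArg Prod.fst hsum
    obtain rfl : t = α - x.1 := by linarith
    exact ⟨x, ⟨hx, ht⟩, congrArg Prod.snd hsum⟩
  · rintro ⟨x, ⟨hx, hxs⟩, rfl⟩
    exact ⟨x, hx, _, ⟨α - x.1, hxs, rfl⟩, Prod.ext (by simp) rfl⟩

theorem encard_preimage_mk_closure_add_graph_diff_le_two {B : Set (ℝ × ℝ)} (hBo : IsOpen B)
    (hB : Convex ℝ B) (hBs : StrictConvex ℝ (closure B)) {s : Set ℝ} (hs : Convex ℝ s)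
    (hsc : IsClosed s) {f : ℝ → ℝ} (hf : ContinuousOn f s) (α : ℝ) :
    (Prod.mk α ⁻¹' ((closure B + (fun t => (t, f t)) '' s) \
      (B + (fun t => (t, f t)) '' s))).encard ≤ 2 := by
  have hslice : Prod.mk α ⁻¹' ((closure B + (fun t => (t, f t)) '' s) \
      (B + (fun t => (t, f t)) '' s)) =
      (fun x : ℝ × ℝ => x.2 + f (α - x.1)) '' (closure B ∩ {x | α - x.1 ∈ s}) \
        (fun x : ℝ × ℝ => x.2 + f (α - x.1)) '' (B ∩ {x | α - x.1 ∈ s}) := by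
    ext y
    simp only [mem_preimage, Set.mem_sdiff, mk_mem_add_graph_iff]
  let φ : ℝ × ℝ →ᵃ[ℝ] ℝ := AffineMap.const ℝ (ℝ × ℝ) α - (LinearMap.fst ℝ ℝ ℝ).toAffineMap
  rw [hslice]
  refine encard_image_closure_inter_diff_le_two hBo hB hBs ?_ ?_ ?_
  · exact hs.affine_preimage φ
  · exact hsc.preimage (by fun_prop)
  · exact continuousOn_snd.add (hf.comp (by fun_prop) fun _ hx => hx)

theorem volume_eq_zero_of_countable_preimage_mk {T : Set (ℝ × ℝ)} (hT : MeasurableSet T)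
    (h : ∀ α, (Prod.mk α ⁻¹' T).Countable) : volume T = 0 := by
  rw [Measure.volume_eq_prod, Measure.measure_prod_null hT]
  exact Eventually.of_forall fun α => (h α).measure_zero _

theorem encard_inter_setOf_fst_eq (T : Set (ℝ × ℝ)) (α : ℝ) :
    (T ∩ {w | w.1 = α}).encard = (Prod.mk α ⁻¹' T).encard := by
  rw [← (Prod.mk_right_injective α).encard_image (Prod.mk α ⁻¹' T)]
  refine congrArg encard ?_
  ext ⟨x, y⟩
  simp only [mem_inter_iff, mem_ofPred_eq, mem_image, mem_preimage, Prod.mk.injEq]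
  constructor
  · rintro ⟨hT, rfl⟩
    exact ⟨y, hT, rfl, rfl⟩
  · rintro ⟨y, hT, rfl, rfl⟩
    exact ⟨hT, rfl⟩

theorem elen_sub_eq_dist (x y : ℝ × ℝ) :
    elen (x - y) = dist (WithLp.toLp 2 x) (WithLp.toLp 2 y) := by
  rw [dist_eq_norm, ← WithLp.toLp_sub, WithLp.prod_norm_eq_of_L2]
  simp [elen]

section Disk

variable (z : ℝ × ℝ) (r : ℝ)

theorem setOf_elen_sub_lt_eq_preimage_ball :
    {x : ℝ × ℝ | elen (x - z) < r} =
      (WithLp.prodContinuousLinearEquiv 2 ℝ ℝ ℝ).symm ⁻¹' Metric.ball (WithLp.toLp 2 z) r := by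
  ext x
  simp [elen_sub_eq_dist]

theorem isOpen_setOf_elen_sub_lt : IsOpen {x : ℝ × ℝ | elen (x - z) < r} := by
  rw [setOf_elen_sub_lt_eq_preimage_ball]
  exact Metric.isOpen_ball.preimage (ContinuousLinearEquiv.continuous _)

theorem convex_setOf_elen_sub_lt : Convex ℝ {x : ℝ × ℝ | elen (x - z) < r} := by
  rw [setOf_elen_sub_lt_eq_preimage_ball]
  exact (convex_ball _ _).linear_preimage
    (WithLp.prodContinuousLinearEquiv 2 ℝ ℝ ℝ).symm.toLinearMap

theorem strictConvex_closure_setOf_elen_sub_lt (hr : r ≠ 0) :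
    StrictConvex ℝ (closure {x : ℝ × ℝ | elen (x - z) < r}) := by
  set e := (WithLp.prodContinuousLinearEquiv 2 ℝ ℝ ℝ).symm
  rw [setOf_elen_sub_lt_eq_preimage_ball, ← e.preimage_closure, closure_ball _ hr]
  exact (strictConvex_closedBall ℝ _ _).linear_preimage e.toLinearMap e.continuous e.injective

end Disk

theorem stmt12_general (a b : ℝ) (f f' : ℝ → ℝ)
    (hderiv : ∀ t ∈ Set.Icc a b, HasDerivAt f (f' t) t)
    (z : ℝ × ℝ) (r : ℝ) (hr : 0 < r) :
    volume ((closure {x : ℝ × ℝ | elen (x - z) < r} + (fun t => (t, f t)) '' Set.Icc a b) \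
        ({x : ℝ × ℝ | elen (x - z) < r} + (fun t => (t, f t)) '' Set.Icc a b)) = 0 ∧
    ∀ α : ℝ,
      (((closure {x : ℝ × ℝ | elen (x - z) < r} + (fun t => (t, f t)) '' Set.Icc a b) \
          ({x : ℝ × ℝ | elen (x - z) < r} + (fun t => (t, f t)) '' Set.Icc a b)) ∩
        {w : ℝ × ℝ | w.1 = α}).encard ≤ 2 := by
  have hf : ContinuousOn f (Icc a b) := fun t ht => (hderiv t ht).continuousAt.continuousWithinAt
  have hslice := encard_preimage_mk_closure_add_graph_diff_le_two (isOpen_setOf_elen_sub_lt z r)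
    (convex_setOf_elen_sub_lt z r) (strictConvex_closure_setOf_elen_sub_lt z r hr.ne')
    (convex_Icc a b) isClosed_Icc hf
  have hΓ : IsCompact ((fun t => (t, f t)) '' Icc a b) :=
    isCompact_Icc.image_of_continuousOn (continuousOn_id.prodMk hf)
  refine ⟨volume_eq_zero_of_countable_preimage_mk ?_ fun α => ?_, fun α => ?_⟩
  · exact (isClosed_closure.add_right_of_isCompact hΓ).measurableSet.diff
      (isOpen_setOf_elen_sub_lt z r).add_right.measurableSet
  · exact (finite_of_encard_le_coe (hslice α)).countable
  · exact (encard_inter_setOf_fst_eq _ α).trans_le (hslice α)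

theorem stmt12 (a b : ℝ) (hab : a ≤ b) (f f' : ℝ → ℝ)
    (hderiv : ∀ t ∈ Set.Icc a b, HasDerivAt f (f' t) t)
    (hcont : ContinuousOn f' (Set.Icc a b))
    (z : ℝ × ℝ) (r : ℝ) (hr : 0 < r) :
    volume ((closure {x : ℝ × ℝ | elen (x - z) < r} + (fun t => (t, f t)) '' Set.Icc a b) \
        ({x : ℝ × ℝ | elen (x - z) < r} + (fun t => (t, f t)) '' Set.Icc a b)) = 0 ∧
    ∀ α : ℝ,
      (((closure {x : ℝ × ℝ | elen (x - z) < r} + (fun t => (t, f t)) '' Set.Icc a b) \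
          ({x : ℝ × ℝ | elen (x - z) < r} + (fun t => (t, f t)) '' Set.Icc a b)) ∩
        {w : ℝ × ℝ | w.1 = α}).encard ≤ 2 :=
  stmt12_general a b f f' hderiv z r hr
end
end
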